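/- arXiv:2005.06009 — 7 statements merged into one kernel-verified Lean document; each statement's English description precedes it below -/
import Mathlib

section
/- Let v ∈ ℝ^N satisfy v > 0, (A−M)v ≥ 𝟙 and v ≤ γ𝟙 for some γ > 0. Then for every D ≥ 0 and every continuous disturbance d : [0,∞) → ℝ^N with |d_i(t)| ≤ D for all i and all t ≥ 0, the trajectory x(t) = ∫₀ᵗ exp(−(t−s)(A−M)) d(s) ds (the solution of ẋ = −(A−M)x + d with x(0)=0) satisfies |x_i(t)| ≤ γ·D for all i and all t ≥ 0. -/
/-!
For `u ≥ 0` the matrix `exp (u • -(A - M))` is entrywise nonnegative, because `-(A - M)` has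
nonnegative off-diagonal entries. Since `|dⱼ| ≤ D ≤ D ((A - M) v)ⱼ`, this gives
`|xᵢ(t)| ≤ D ∫₀ᵗ (exp (u • -(A - M)) (A - M) v)ᵢ du = D (v - exp (t • -(A - M)) v)ᵢ ≤ D vᵢ ≤ γ D`,
the middle equality being the fundamental theorem of calculus for `u ↦ exp (u • -(A - M)) v`.
-/

open Matrix MeasureTheory NormedSpace

attribute [local instance] Matrix.linftyOpNormedRing Matrix.linftyOpNormedAlgebra

theorem intervalIntegral.eval_integral {ι : Type*} [Fintype ι] {f : ℝ → ι → ℝ} {a b : ℝ}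
    (hf : IntervalIntegrable f volume a b) (i : ι) :
    (∫ s in a..b, f s) i = ∫ s in a..b, f s i :=
  ((ContinuousLinearMap.proj (R := ℝ) (φ := fun _ : ι => ℝ) i).intervalIntegral_comp_comm hf).symm

namespace Matrix

section Rectangular

variable {m n : Type*} [Fintype n] {E : Matrix m n ℝ}

theorem mulVec_apply_nonneg (hE : ∀ i j, 0 ≤ E i j) {w : n → ℝ} (hw : ∀ j, 0 ≤ w j) (i : m) :
    0 ≤ (E *ᵥ w) i :=
  Finset.sum_nonneg fun j _ => mul_nonneg (hE i j) (hw j)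

theorem abs_mulVec_apply_le (hE : ∀ i j, 0 ≤ E i j) {d w : n → ℝ} (hdw : ∀ j, |d j| ≤ w j)
    (i : m) : |(E *ᵥ d) i| ≤ (E *ᵥ w) i :=
  (Finset.abs_sum_le_sum_abs _ _).trans <| Finset.sum_le_sum fun j _ => by
    rw [abs_mul, abs_of_nonneg (hE i j)]
    exact mul_le_mul_of_nonneg_left (hdw j) (hE i j)

end Rectangular

variable {n : Type*} [Fintype n] [DecidableEq n]

theorem exp_apply_nonneg_of_nonneg {P : Matrix n n ℝ} (hP : ∀ i j, 0 ≤ P i j) (i j : n) :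
    0 ≤ exp P i j := by
  have hpow : ∀ k : ℕ, ∀ i j, 0 ≤ (P ^ k) i j := by
    intro k
    induction k with
    | zero => intro i j; rw [pow_zero, one_apply]; split_ifs <;> norm_num
    | succ k ih =>
      intro i j
      rw [pow_succ, mul_apply]
      exact Finset.sum_nonneg fun l _ => mul_nonneg (ih i l) (hP l j)
  have hsum := Pi.hasSum.mp (Pi.hasSum.mp (exp_series_hasSum_exp' (𝕂 := ℝ) P) i) j
  exact hsum.nonneg fun k => mul_nonneg (by positivity) (hpow k i j)

/-- Shifting by a large multiple `c • 1` of the identity makes `C` entrywise nonnegative, and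
`exp C = exp (-c) • exp (C + c • 1)`. -/
theorem exp_apply_nonneg_of_offDiag_nonneg {C : Matrix n n ℝ} (hC : ∀ i j, i ≠ j → 0 ≤ C i j)
    (i j : n) : 0 ≤ exp C i j := by
  set c : ℝ := ∑ k, |C k k|
  have hshift : ∀ i j, 0 ≤ (C + c • 1) i j := by
    intro i j
    rcases eq_or_ne i j with rfl | hij
    · have : |C i i| ≤ c := Finset.single_le_sum (f := fun k => |C k k|)
        (fun _ _ => abs_nonneg _) (Finset.mem_univ i)
      simp only [add_apply, smul_apply, one_apply_eq, smul_eq_mul, mul_one]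
      linarith [neg_abs_le (C i i)]
    · simpa [one_apply_ne hij] using hC i j hij
  have hsplit : C = (C + c • 1) + algebraMap ℝ _ (-c) := by
    rw [Algebra.algebraMap_eq_smul_one, neg_smul, add_neg_cancel_right]
  have hexp : exp (algebraMap ℝ (Matrix n n ℝ) (-c)) = algebraMap ℝ _ (Real.exp (-c)) := by
    -- the two sides differ only in the instance path to `Algebra ℝ (Matrix n n ℝ)`
    rw [Real.exp_eq_exp_ℝ, algebraMap_exp_comm]; rfl
  rw [hsplit, exp_add_of_commute _ _ (Algebra.commute_algebraMap_right _ _), hexp,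
    ← Algebra.commutes, ← Algebra.smul_def, smul_apply, smul_eq_mul]
  exact mul_nonneg (Real.exp_pos _).le (exp_apply_nonneg_of_nonneg hshift i j)

noncomputable def mulVecCLM (w : n → ℝ) : Matrix n n ℝ →L[ℝ] n → ℝ :=
  LinearMap.toContinuousLinearMap ((LinearMap.applyₗ w).comp (toLin' (R := ℝ)).toLinearMap)

@[simp] theorem mulVecCLM_apply (w : n → ℝ) (Y : Matrix n n ℝ) : mulVecCLM w Y = Y *ᵥ w :=
  toLin'_apply Y w

theorem hasDerivAt_exp_smul_mulVec (B : Matrix n n ℝ) (w : n → ℝ) (u : ℝ) :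
    HasDerivAt (fun u : ℝ => exp (u • B) *ᵥ w) (exp (u • B) *ᵥ (B *ᵥ w)) u := by
  have := (mulVecCLM w).hasFDerivAt.comp_hasDerivAt u (hasDerivAt_exp_smul_const (𝕂 := ℝ) B u)
  simp only [Function.comp_def, mulVecCLM_apply] at this
  rwa [mulVec_mulVec]

theorem integral_exp_smul_mulVec (B : Matrix n n ℝ) (w : n → ℝ) (t : ℝ) :
    ∫ u in (0 : ℝ)..t, exp (u • B) *ᵥ (B *ᵥ w) = exp (t • B) *ᵥ w - w := by
  have hcont : Continuous fun u : ℝ => exp (u • B) := exp_continuous.comp (by fun_prop)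
  rw [intervalIntegral.integral_eq_sub_of_hasDerivAt (fun u _ => hasDerivAt_exp_smul_mulVec B w u)
    ((hcont.matrix_mulVec continuous_const).intervalIntegrable 0 t)]
  simp

theorem abs_integral_exp_smul_neg_mulVec_apply_le {K : Matrix n n ℝ}
    (hK : ∀ i j, i ≠ j → K i j ≤ 0) {w : n → ℝ} (hw : ∀ j, 0 ≤ w j) {d : ℝ → n → ℝ} {t : ℝ}
    (ht : 0 ≤ t) (hd : ContinuousOn d (Set.Icc 0 t))
    (hdw : ∀ s ∈ Set.Icc 0 t, ∀ j, |d s j| ≤ (K *ᵥ w) j) (i : n) :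
    |(∫ s in (0 : ℝ)..t, exp ((t - s) • -K) *ᵥ d s) i| ≤ w i := by
  have hE : ∀ u : ℝ, 0 ≤ u → ∀ a b, 0 ≤ exp (u • -K) a b := fun u hu =>
    exp_apply_nonneg_of_offDiag_nonneg fun a b hab => by
      simp only [neg_apply, smul_apply, smul_eq_mul]
      nlinarith [hK a b hab]
  have hEcont : Continuous fun u : ℝ => exp (u • -K) := exp_continuous.comp (by fun_prop)
  set f : ℝ → n → ℝ := fun s => exp ((t - s) • -K) *ᵥ d s
  set g : ℝ → n → ℝ := fun s => exp ((t - s) • -K) *ᵥ (K *ᵥ w)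
  have hf : ContinuousOn f (Set.uIcc 0 t) :=
    (continuous_fst.matrix_mulVec continuous_snd).comp_continuousOn
      ((hEcont.comp (by fun_prop)).continuousOn.prodMk (Set.uIcc_of_le ht ▸ hd))
  have hg : Continuous g := (hEcont.comp (by fun_prop)).matrix_mulVec continuous_const
  have hfg : ∀ s ∈ Set.Icc 0 t, |f s i| ≤ g s i := fun s hs =>
    abs_mulVec_apply_le (hE _ (sub_nonneg.2 hs.2)) (hdw s hs) i
  have hgint : ∫ s in (0 : ℝ)..t, g s = w - exp (t • -K) *ᵥ w := by
    have hFTC := integral_exp_smul_mulVec (-K) w t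
    simp only [neg_mulVec, mulVec_neg, intervalIntegral.integral_neg] at hFTC
    rw [intervalIntegral.integral_comp_sub_left (fun u => exp (u • -K) *ᵥ (K *ᵥ w)), sub_self,
      sub_zero, ← neg_sub, ← hFTC, neg_neg]
  rw [intervalIntegral.eval_integral hf.intervalIntegrable]
  calc |∫ s in (0 : ℝ)..t, f s i|
      ≤ ∫ s in (0 : ℝ)..t, |f s i| := intervalIntegral.abs_integral_le_integral_abs ht
    _ ≤ ∫ s in (0 : ℝ)..t, g s i := intervalIntegral.integral_mono_on ht
        ((continuous_apply i).comp_continuousOn hf).abs.intervalIntegrable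
        (((continuous_apply i).comp hg).intervalIntegrable 0 t) hfg
    _ = w i - (exp (t • -K) *ᵥ w) i := by
      rw [← intervalIntegral.eval_integral (hg.intervalIntegrable 0 t), hgint, Pi.sub_apply]
    _ ≤ w i := sub_le_self _ (mulVec_apply_nonneg (hE t ht) hw i)

end Matrix

theorem stmt_0_general {N : ℕ} (A M : Matrix (Fin N) (Fin N) ℝ)
    (hAdiag : ∀ i j, i ≠ j → A i j = 0)
    (hMnonneg : ∀ i j, 0 ≤ M i j)
    (v : Fin N → ℝ) (hvpos : ∀ i, 0 < v i)
    (hvineq : ∀ i, (1 : ℝ) ≤ ((A - M) *ᵥ v) i)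
    (γ : ℝ) (hvγ : ∀ i, v i ≤ γ)
    (D : ℝ) (hD : 0 ≤ D)
    (d : ℝ → Fin N → ℝ) (hd : ContinuousOn d (Set.Ici 0))
    (hdbound : ∀ i : Fin N, ∀ t ≥ (0 : ℝ), |d t i| ≤ D)
    (x : ℝ → Fin N → ℝ)
    (hx : ∀ t : ℝ, x t = ∫ s in (0 : ℝ)..t, (NormedSpace.exp (-((t - s) • (A - M)))) *ᵥ d s) :
    ∀ i : Fin N, ∀ t ≥ (0 : ℝ), |x t i| ≤ γ * D := by
  intro i t ht
  have hK : ∀ i j, i ≠ j → (A - M) i j ≤ 0 := fun i j hij => by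
    simpa [hAdiag i j hij] using hMnonneg i j
  have hdw : ∀ s ∈ Set.Icc 0 t, ∀ j, |d s j| ≤ ((A - M) *ᵥ (D • v)) j := fun s hs j => by
    rw [mulVec_smul, Pi.smul_apply, smul_eq_mul]
    exact (hdbound j s hs.1).trans (le_mul_of_one_le_right hD (hvineq j))
  have hbound := abs_integral_exp_smul_neg_mulVec_apply_le hK
    (fun j => mul_nonneg hD (hvpos j).le) ht (hd.mono Set.Icc_subset_Ici_self) hdw i
  calc |x t i| ≤ D * v i := by simpa only [hx, smul_neg] using hbound
    _ ≤ γ * D := by nlinarith [hvγ i]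

/-- If `v > 0` satisfies `(A - M) v ≥ 𝟙` and `v ≤ γ 𝟙`, then the solution
`x(t) = ∫₀ᵗ exp(-(t-s)(A-M)) d(s) ds` of `ẋ = -(A-M)x + d`, `x(0) = 0`, with continuous
disturbance bounded by `D`, satisfies `|xᵢ(t)| ≤ γ D` for all `i` and `t ≥ 0`. -/
theorem stmt_0 {N : ℕ} (A M : Matrix (Fin N) (Fin N) ℝ)
    (hAdiag : ∀ i j, i ≠ j → A i j = 0) (hApos : ∀ i, 0 < A i i)
    (hMnonneg : ∀ i j, 0 ≤ M i j) (hMdiag : ∀ i, M i i = 0)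
    (v : Fin N → ℝ) (hvpos : ∀ i, 0 < v i)
    (hvineq : ∀ i, (1 : ℝ) ≤ ((A - M) *ᵥ v) i)
    (γ : ℝ) (hγ : 0 < γ) (hvγ : ∀ i, v i ≤ γ)
    (D : ℝ) (hD : 0 ≤ D)
    (d : ℝ → Fin N → ℝ) (hd : ContinuousOn d (Set.Ici 0))
    (hdbound : ∀ i : Fin N, ∀ t ≥ (0 : ℝ), |d t i| ≤ D)
    (x : ℝ → Fin N → ℝ)
    (hx : ∀ t : ℝ, x t = ∫ s in (0 : ℝ)..t, (NormedSpace.exp (-((t - s) • (A - M)))) *ᵥ d s) :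
    ∀ i : Fin N, ∀ t ≥ (0 : ℝ), |x t i| ≤ γ * D :=
  stmt_0_general A M hAdiag hMnonneg v hvpos hvineq γ hvγ D hD d hd hdbound x hx
end

section
/- Suppose −(A−M) is Hurwitz. Then A−M is invertible, every entry of (A−M)^{−1} is nonnegative, and the vector u = (A−M)^{−1}𝟙 has all entries strictly positive. -/
/-!
Write `B = A - M = s • (1 - Q)` with `Q = 1 - s⁻¹ • B`. As the off-diagonal entries of `B` are
nonpositive, `Q` is entrywise nonnegative once `s` dominates the diagonal of `B`; as every
eigenvalue `λ` of `B` has positive real part, the eigenvalues `1 - λ / s` of `Q` lie in the open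
unit disc once `s` is large. By Gelfand's formula the Neumann series `∑ Qᵏ` then converges, and
`B⁻¹ = s⁻¹ • ∑ Qᵏ` is entrywise nonnegative. Finally `uᵢ` is the `i`-th row sum of the nonnegative
invertible matrix `B⁻¹`, and it is positive because that row cannot vanish.
-/

open Matrix

/-- A real square matrix is Hurwitz if every eigenvalue (over `ℂ`) has negative real part. -/
def IsHurwitz {n : Type*} [Fintype n] [DecidableEq n] (B : Matrix n n ℝ) : Prop :=
  ∀ μ ∈ spectrum ℂ (B.map Complex.ofReal), μ.re < 0

open Filter
open scoped ENNReal

theorem summable_pow_of_spectralRadius_lt_one {A : Type*} [NormedRing A] [NormedAlgebra ℂ A]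
    [CompleteSpace A] {a : A} (ha : spectralRadius ℂ a < 1) : Summable (a ^ ·) := by
  obtain ⟨r, hρr, hr1⟩ := ENNReal.lt_iff_exists_nnreal_btwn.mp ha
  have hroot : ∀ᶠ n : ℕ in atTop, (‖a ^ n‖₊ : ℝ≥0∞) ^ (1 / n : ℝ) < r :=
    (spectrum.pow_nnnorm_pow_one_div_tendsto_nhds_spectralRadius a).eventually (gt_mem_nhds hρr)
  refine Summable.of_norm_bounded_eventually_nat (g := fun n => (r : ℝ) ^ n)
    (summable_geometric_of_lt_one r.2 (by exact_mod_cast hr1)) ?_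
  filter_upwards [hroot, eventually_ne_atTop 0] with n hn hn0
  rw [one_div, ENNReal.rpow_inv_lt_iff (by positivity), ENNReal.rpow_natCast] at hn
  exact_mod_cast hn.le

theorem summable_pow_of_forall_mem_spectrum_norm_lt_one {A : Type*} [NormedRing A]
    [NormedAlgebra ℂ A] [CompleteSpace A] {a : A} (ha : ∀ z ∈ spectrum ℂ a, ‖z‖ < 1) :
    Summable (a ^ ·) := by
  rcases subsingleton_or_nontrivial A with _ | _
  · simp [Subsingleton.elim _ (0 : A)]
  · refine summable_pow_of_spectralRadius_lt_one ?_
    simpa using spectrum.spectralRadius_lt_of_forall_lt a (r := 1)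
      fun z hz => by simpa [← NNReal.coe_lt_coe] using ha z hz

theorem Complex.eventually_norm_one_sub_div_lt_one {z : ℂ} (hz : 0 < z.re) :
    ∀ᶠ s : ℝ in atTop, ‖1 - z / s‖ < 1 := by
  filter_upwards [eventually_gt_atTop (‖z‖ ^ 2 / (2 * z.re)), eventually_gt_atTop 0]
    with s hs hs0
  rw [div_lt_iff₀ (by positivity)] at hs
  have hsz : ‖(s : ℂ) - z‖ < s := by
    rw [← sq_lt_sq₀ (norm_nonneg _) hs0.le, Complex.sq_norm, Complex.normSq_apply]
    rw [Complex.sq_norm, Complex.normSq_apply] at hs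
    simp only [Complex.sub_re, Complex.ofReal_re, Complex.sub_im, Complex.ofReal_im]
    nlinarith
  rwa [one_sub_div (by exact_mod_cast hs0.ne'), norm_div, Complex.norm_real,
    Real.norm_of_nonneg hs0.le, div_lt_one hs0]

theorem spectrum.exists_eq_one_sub_mul_of_mem_one_sub_smul {𝕜 A : Type*} [Field 𝕜] [Ring A]
    [Algebra 𝕜 A] {b : A} {c : 𝕜} (hc : c ≠ 0) {μ : 𝕜} (hμ : μ ∈ spectrum 𝕜 (1 - c • b)) :
    ∃ z ∈ spectrum 𝕜 b, μ = 1 - c * z := by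
  have h : 1 - c • b = algebraMap 𝕜 A 1 + (Units.mk0 (-c) (neg_ne_zero.mpr hc)) • b := by
    rw [map_one, Units.smul_mk0, neg_smul, sub_eq_add_neg]
  rw [h, ← spectrum.vadd_eq, spectrum.unit_smul_eq_smul] at hμ
  obtain ⟨_, ⟨z, hz, rfl⟩, rfl⟩ := hμ
  exact ⟨z, hz, by simp [sub_eq_add_neg]⟩

namespace Matrix

variable {n : Type*} [Fintype n] [DecidableEq n]

theorem summable_pow_of_forall_mem_spectrum_norm_lt_one {Q : Matrix n n ℝ}
    (hQ : ∀ z ∈ spectrum ℂ (Q.map Complex.ofReal), ‖z‖ < 1) : Summable (Q ^ ·) := by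
  -- Gelfand's formula needs some Banach algebra norm on complex matrices; any one will do.
  let _ := Matrix.linftyOpNormedRing (n := n) (α := ℂ)
  let _ := Matrix.linftyOpNormedAlgebra (n := n) (R := ℂ) (α := ℂ)
  have h := (_root_.summable_pow_of_forall_mem_spectrum_norm_lt_one hQ).map
    (Complex.reAddGroupHom.mapMatrix) (continuous_id.matrix_map Complex.continuous_re)
  convert h using 2 with k
  have : Q.map Complex.ofReal ^ k = (Q ^ k).map Complex.ofReal :=
    (map_pow (Complex.ofRealHom.mapMatrix : Matrix n n ℝ →+* _) Q k).symm
  ext i j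
  simp [this]

theorem isUnit_and_inv_nonneg_of_offDiag_nonpos_of_spectrum_re_pos {B : Matrix n n ℝ}
    (hB : ∀ i j, i ≠ j → B i j ≤ 0)
    (hspec : ∀ z ∈ spectrum ℂ (B.map Complex.ofReal), 0 < z.re) :
    IsUnit B ∧ ∀ i j, 0 ≤ B⁻¹ i j := by
  obtain ⟨s, hs0, hdiag, hsB⟩ : ∃ s : ℝ, 0 < s ∧ (∀ i, B i i ≤ s) ∧
      ∀ z ∈ spectrum ℂ (B.map Complex.ofReal), ‖1 - z / s‖ < 1 :=
    ((eventually_gt_atTop 0).and ((eventually_all.2 fun i => eventually_ge_atTop (B i i)).and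
      ((finite_spectrum _).eventually_all.2 fun z hz =>
        Complex.eventually_norm_one_sub_div_lt_one (hspec z hz)))).exists
  set Q : Matrix n n ℝ := 1 - s⁻¹ • B with hQ
  have hQ_nonneg : ∀ i j, 0 ≤ Q i j := by
    intro i j
    rcases eq_or_ne i j with rfl | hij
    · simpa [hQ, inv_mul_le_one₀ hs0] using hdiag i
    · simpa [hQ, one_apply_ne hij] using
        mul_nonpos_of_nonneg_of_nonpos (inv_nonneg.2 hs0.le) (hB i j hij)
  have hQ_spec : ∀ μ ∈ spectrum ℂ (Q.map Complex.ofReal), ‖μ‖ < 1 := by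
    have hQC : Q.map Complex.ofReal = 1 - (s⁻¹ : ℂ) • B.map Complex.ofReal := by
      ext i j
      simp only [hQ, map_apply, sub_apply, smul_apply, one_apply, smul_eq_mul]
      split_ifs <;> push_cast <;> rfl
    intro μ hμ
    rw [hQC] at hμ
    obtain ⟨z, hz, rfl⟩ :=
      spectrum.exists_eq_one_sub_mul_of_mem_one_sub_smul (by simp [hs0.ne']) hμ
    simpa [div_eq_inv_mul] using hsB z hz
  have hsum := summable_pow_of_forall_mem_spectrum_norm_lt_one hQ_spec
  have hleft : (s⁻¹ • ∑' k, Q ^ k) * B = 1 := by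
    have hB : B = s • (1 - Q) := by simp [hQ, smul_smul, hs0.ne']
    rw [hB, smul_mul_smul_comm, inv_mul_cancel₀ hs0.ne', one_smul, hsum.tsum_pow_mul_one_sub]
  refine ⟨(isUnit_iff_isUnit_det B).2 (isUnit_det_of_left_inverse hleft), ?_⟩
  intro i j
  have hentry : HasSum (fun k => (Q ^ k) i j) ((∑' k, Q ^ k) i j) :=
    Pi.hasSum.1 (Pi.hasSum.1 hsum.hasSum i) j
  rw [inv_eq_left_inv hleft, smul_apply, smul_eq_mul]
  exact mul_nonneg (inv_nonneg.2 hs0.le)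
    (hentry.nonneg fun k => pow_apply_nonneg hQ_nonneg k i j)

theorem mulVec_const_one_pos_of_nonneg {P : Matrix n n ℝ} (hP : IsUnit P)
    (hP_nonneg : ∀ i j, 0 ≤ P i j) (i : n) : 0 < (P *ᵥ fun _ => (1 : ℝ)) i := by
  have hrow : ∃ j, P i j ≠ 0 := by
    by_contra! h
    have := congr_fun₂ (mul_nonsing_inv P ((isUnit_iff_isUnit_det P).1 hP)) i i
    simp [mul_apply, h] at this
  obtain ⟨j, hj⟩ := hrow
  simp only [mulVec, dotProduct, mul_one]
  exact Finset.sum_pos' (fun k _ => hP_nonneg i k)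
    ⟨j, Finset.mem_univ j, (hP_nonneg i j).lt_of_ne' hj⟩

end Matrix

theorem isHurwitz_neg_iff {n : Type*} [Fintype n] [DecidableEq n] {B : Matrix n n ℝ} :
    IsHurwitz (-B) ↔ ∀ z ∈ spectrum ℂ (B.map Complex.ofReal), 0 < z.re := by
  rw [IsHurwitz, Matrix.map_neg _ Complex.ofReal_neg, ← spectrum.neg_eq, neg_surjective.forall]
  simp

theorem stmt_3_general {N : ℕ} (A M : Matrix (Fin N) (Fin N) ℝ)
    (hAdiag : ∀ i j, i ≠ j → A i j = 0)
    (hMnonneg : ∀ i j, 0 ≤ M i j)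
    (hHur : IsHurwitz (-(A - M))) :
    IsUnit (A - M) ∧
    (∀ i j, 0 ≤ (A - M)⁻¹ i j) ∧
    (∀ i, 0 < ((A - M)⁻¹ *ᵥ (fun _ : Fin N => (1 : ℝ))) i) := by
  have hoff : ∀ i j, i ≠ j → (A - M) i j ≤ 0 := fun i j hij => by
    simpa [hAdiag i j hij] using hMnonneg i j
  obtain ⟨hunit, hinv⟩ :=
    isUnit_and_inv_nonneg_of_offDiag_nonpos_of_spectrum_re_pos hoff (isHurwitz_neg_iff.1 hHur)
  exact ⟨hunit, hinv, mulVec_const_one_pos_of_nonneg (isUnit_nonsing_inv_iff.2 hunit) hinv⟩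

/-- If `-(A-M)` is Hurwitz, then `A-M` is invertible, `(A-M)⁻¹` has
nonnegative entries, and `u = (A-M)⁻¹ 𝟙` has strictly positive entries. -/
theorem stmt_3 {N : ℕ} (A M : Matrix (Fin N) (Fin N) ℝ)
    (hAdiag : ∀ i j, i ≠ j → A i j = 0) (hApos : ∀ i, 0 < A i i)
    (hMnonneg : ∀ i j, 0 ≤ M i j) (hMdiag : ∀ i, M i i = 0)
    (hHur : IsHurwitz (-(A - M))) :
    IsUnit (A - M) ∧
    (∀ i j, 0 ≤ (A - M)⁻¹ i j) ∧
    (∀ i, 0 < ((A - M)⁻¹ *ᵥ (fun _ : Fin N => (1 : ℝ))) i) :=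
  stmt_3_general A M hAdiag hMnonneg hHur
end

section
/- The matrix −(A−M) is Hurwitz if and only if the spectral radius of MA^{−1} is strictly less than 1, i.e., every eigenvalue of MA^{−1} (viewed as a complex matrix) has modulus strictly less than 1. -/
/-!
Write `A = diagonal d`. Both sides of the equivalence fail exactly when some nonzero `w ≥ 0`
satisfies `d * w ≤ M *ᵥ w`. An eigenvector `v` of `M - A` with `0 ≤ re μ`, or of `M A⁻¹` with
`1 ≤ ‖μ‖`, produces such a `w` (namely `|v|`, resp. `|A⁻¹ v|`) by the triangle inequality.

Conversely, the Collatz–Wielandt bound — `r • w ≤ B *ᵥ w` with `B ≥ 0` forces `r ≤ ρ(B)`, since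
then `r ^ k ≤ ‖B ^ k‖` and Gelfand's formula applies — turns such a `w` into an eigenvalue of
`M A⁻¹` of modulus `≥ 1` (use `A *ᵥ w`), and into an eigenvalue `ν` of `M - A + c` with `c ≤ ‖ν‖`.
Choosing `c` so large that `M - A + c ≥ 0` and `‖c + μ‖ < c` for each of the finitely many
eigenvalues `μ` of `M - A` with `re μ < 0`, the eigenvalue `ν - c` of `M - A` has `0 ≤ re`.
-/

open Matrix

open scoped NNReal ENNReal

theorem Pi.norm_le_norm_of_nonneg_of_le {n : Type*} [Fintype n] {u v : n → ℝ} (hu : 0 ≤ u)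
    (huv : u ≤ v) : ‖u‖ ≤ ‖v‖ :=
  (pi_norm_le_iff_of_nonneg (norm_nonneg v)).mpr fun i ↦ by
    rw [Real.norm_of_nonneg (hu i)]
    exact (huv i).trans ((le_abs_self _).trans (norm_le_pi_norm v i))

theorem Complex.eventually_norm_ofReal_add_lt {μ : ℂ} (hμ : μ.re < 0) :
    ∀ᶠ c : ℝ in Filter.atTop, ‖(c : ℂ) + μ‖ < c := by
  filter_upwards [Filter.eventually_gt_atTop (‖μ‖ ^ 2 / (-2 * μ.re)), Filter.eventually_gt_atTop 0]
    with c hc hc0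
  rw [div_lt_iff₀ (by linarith)] at hc
  have hsq : ‖(c : ℂ) + μ‖ ^ 2 = c ^ 2 + 2 * c * μ.re + ‖μ‖ ^ 2 := by
    simp only [Complex.sq_norm, Complex.normSq_apply, Complex.add_re, Complex.add_im,
      Complex.ofReal_re, Complex.ofReal_im]
    ring
  refine lt_of_pow_lt_pow_left₀ 2 hc0.le ?_
  rw [hsq]
  nlinarith

namespace Matrix

variable {m n : Type*} [Fintype n]

theorem mulVec_le_mulVec_of_nonneg {B : Matrix m n ℝ} (hB : ∀ i j, 0 ≤ B i j) {u v : n → ℝ}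
    (huv : u ≤ v) : B *ᵥ u ≤ B *ᵥ v :=
  fun i ↦ dotProduct_le_dotProduct_of_nonneg_left huv (hB i)

theorem norm_map_ofReal_mulVec_apply_le {B : Matrix m n ℝ} (hB : ∀ i j, 0 ≤ B i j)
    (v : n → ℂ) (i : m) : ‖(B.map Complex.ofReal *ᵥ v) i‖ ≤ (B *ᵥ fun j ↦ ‖v j‖) i := by
  simp only [mulVec, dotProduct, map_apply]
  refine (norm_sum_le _ _).trans_eq (Finset.sum_congr rfl fun j _ ↦ ?_)
  rw [norm_mul, Complex.norm_real, Real.norm_of_nonneg (hB i j)]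

variable [DecidableEq n]

theorem diagonal_mulVec_eq_mul {R : Type*} [NonUnitalNonAssocSemiring R] (d w : n → R) :
    diagonal d *ᵥ w = d * w :=
  funext (mulVec_diagonal d w)

theorem inv_diagonal_of_ne_zero {K : Type*} [Field K] {d : n → K} (hd : ∀ i, d i ≠ 0) :
    (diagonal d)⁻¹ = diagonal d⁻¹ :=
  inv_eq_right_inv <| by rw [diagonal_mul_diagonal]; simp [hd]

theorem mem_spectrum_iff_exists_mulVec_eq_smul {K : Type*} [Field K] {C : Matrix n n K} {μ : K} :
    μ ∈ spectrum K C ↔ ∃ v ≠ 0, C *ᵥ v = μ • v := by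
  rw [← spectrum_toLin', ← Module.End.hasEigenvalue_iff_mem_spectrum]
  constructor
  · intro h
    obtain ⟨v, hv, hv0⟩ := h.exists_hasEigenvector
    exact ⟨v, hv0, Module.End.mem_eigenspace_iff.mp hv⟩
  · rintro ⟨v, hv0, hv⟩
    exact Module.End.hasEigenvalue_of_hasEigenvector ⟨Module.End.mem_eigenspace_iff.mpr hv, hv0⟩

end Matrix

variable {n : Type*} [Fintype n] [DecidableEq n]

section CollatzWielandt

attribute [local instance] Matrix.linftyOpNormedAddCommGroup Matrix.linftyOpNormedRing
  Matrix.linftyOpNormedAlgebra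

theorem le_spectralRadius_of_smul_le_mulVec {B : Matrix n n ℝ} (hB : ∀ i j, 0 ≤ B i j)
    {w : n → ℝ} (hw : 0 ≤ w) (hw0 : w ≠ 0) {r : ℝ≥0} (hr : (r : ℝ) • w ≤ B *ᵥ w) :
    (r : ℝ≥0∞) ≤ spectralRadius ℂ (B.map Complex.ofReal) := by
  have hpow : ∀ k : ℕ, ((r : ℝ) ^ k) • w ≤ (B ^ k) *ᵥ w := by
    intro k
    induction k with
    | zero => simp
    | succ k ih =>
      calc ((r : ℝ) ^ (k + 1)) • w = ((r : ℝ) ^ k) • ((r : ℝ) • w) := by rw [pow_succ, mul_smul]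
        _ ≤ ((r : ℝ) ^ k) • (B *ᵥ w) := smul_le_smul_of_nonneg_left hr (by positivity)
        _ = B *ᵥ (((r : ℝ) ^ k) • w) := (mulVec_smul _ _ _).symm
        _ ≤ B *ᵥ ((B ^ k) *ᵥ w) := mulVec_le_mulVec_of_nonneg hB ih
        _ = (B ^ (k + 1)) *ᵥ w := by rw [mulVec_mulVec, pow_succ']
  have hnorm : ∀ k : ℕ, r ^ k ≤ ‖(B.map Complex.ofReal) ^ k‖₊ := by
    intro k
    have hmap : ‖(B.map Complex.ofReal) ^ k‖₊ = ‖B ^ k‖₊ := by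
      rw [← show (B ^ k).map Complex.ofReal = B.map Complex.ofReal ^ k from
        Matrix.map_pow B Complex.ofRealHom k, linfty_opNNNorm_def, linfty_opNNNorm_def]
      simp
    have hwk := (Pi.norm_le_norm_of_nonneg_of_le (smul_nonneg (by positivity) hw)
      (hpow k)).trans (linfty_opNorm_mulVec (B ^ k) w)
    rw [norm_smul, Real.norm_of_nonneg (by positivity)] at hwk
    rw [hmap, ← NNReal.coe_le_coe]
    push_cast
    exact le_of_mul_le_mul_right hwk (norm_pos_iff.mpr hw0)
  refine ge_of_tendsto (spectrum.pow_nnnorm_pow_one_div_tendsto_nhds_spectralRadius _) ?_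
  filter_upwards [Filter.eventually_ge_atTop 1] with k hk
  calc (r : ℝ≥0∞) = ((r : ℝ≥0∞) ^ k) ^ (1 / (k : ℝ)) := by
        rw [one_div, ENNReal.pow_rpow_inv_natCast (by omega)]
    _ ≤ _ := by gcongr; exact_mod_cast hnorm k

theorem exists_le_norm_mem_spectrum_of_smul_le_mulVec {B : Matrix n n ℝ}
    (hB : ∀ i j, 0 ≤ B i j) {w : n → ℝ} (hw : 0 ≤ w) (hw0 : w ≠ 0) {r : ℝ} (hr0 : 0 ≤ r)
    (hr : r • w ≤ B *ᵥ w) : ∃ μ ∈ spectrum ℂ (B.map Complex.ofReal), r ≤ ‖μ‖ := by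
  lift r to ℝ≥0 using hr0
  have : Nonempty n := by
    by_contra h
    exact hw0 (funext fun i ↦ (h ⟨i⟩).elim)
  obtain ⟨μ, hμ, hμr⟩ := spectrum.exists_nnnorm_eq_spectralRadius (B.map Complex.ofReal)
  refine ⟨μ, hμ, ?_⟩
  exact_mod_cast (le_spectralRadius_of_smul_le_mulVec hB hw hw0 hr).trans_eq hμr.symm

end CollatzWielandt

theorem exists_re_nonneg_mem_spectrum_of_mulVec_nonneg {Q : Matrix n n ℝ}
    (hQ : ∀ i j, i ≠ j → 0 ≤ Q i j) {w : n → ℝ} (hw : 0 ≤ w) (hw0 : w ≠ 0)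
    (hQw : 0 ≤ Q *ᵥ w) : ∃ μ ∈ spectrum ℂ (Q.map Complex.ofReal), 0 ≤ μ.re := by
  by_contra! hneg
  have hlarge : ∀ᶠ c : ℝ in Filter.atTop, 0 ≤ c ∧ (∀ i, -Q i i ≤ c) ∧
      ∀ μ ∈ spectrum ℂ (Q.map Complex.ofReal), ‖(c : ℂ) + μ‖ < c :=
    (Filter.eventually_ge_atTop 0).and <|
      (Filter.eventually_all.mpr fun i ↦ Filter.eventually_ge_atTop _).and <|
      (finite_spectrum _).eventually_all.mpr fun μ hμ ↦
        Complex.eventually_norm_ofReal_add_lt (hneg μ hμ)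
  obtain ⟨c, hc0, hcQ, hcσ⟩ := hlarge.exists
  set B := Q + diagonal fun _ ↦ c
  have hB : ∀ i j, 0 ≤ B i j := by
    intro i j
    rcases eq_or_ne i j with rfl | hij
    · simp only [B, Matrix.add_apply, diagonal_apply_eq]; linarith [hcQ i]
    · simpa [B, hij] using hQ i j hij
  have hBw : c • w ≤ B *ᵥ w := by
    intro i
    simp only [B, add_mulVec, Pi.add_apply, mulVec_diagonal, Pi.smul_apply, smul_eq_mul]
    linarith [show 0 ≤ (Q *ᵥ w) i from hQw i]
  obtain ⟨ν, hν, hcν⟩ := exists_le_norm_mem_spectrum_of_smul_le_mulVec hB hw hw0 hc0 hBw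
  have hBmap : B.map Complex.ofReal = Q.map Complex.ofReal + algebraMap ℂ _ c := by
    ext i j
    simp [B, algebraMap_eq_diagonal, diagonal_apply, apply_ite Complex.ofReal]
  rw [hBmap, ← spectrum.add_singleton_eq] at hν
  obtain ⟨μ, hμ, _, rfl, rfl⟩ := hν
  exact (hcσ μ hμ).not_ge (by rwa [add_comm])

section DiagonalAndNonneg

variable {d : n → ℝ} {M : Matrix n n ℝ}

theorem exists_le_mulVec_of_re_nonneg_mem_spectrum (hM : ∀ i j, 0 ≤ M i j) {μ : ℂ}
    (hμ : μ ∈ spectrum ℂ ((M - diagonal d).map Complex.ofReal)) (hμre : 0 ≤ μ.re) :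
    ∃ w, 0 ≤ w ∧ w ≠ 0 ∧ d * w ≤ M *ᵥ w := by
  obtain ⟨v, hv0, hv⟩ := mem_spectrum_iff_exists_mulVec_eq_smul.mp hμ
  refine ⟨fun j ↦ ‖v j‖, fun j ↦ norm_nonneg _,
    fun h ↦ hv0 (funext fun j ↦ norm_eq_zero.mp (congrFun h j)), fun i ↦ ?_⟩
  have hMv : (M.map Complex.ofReal *ᵥ v) i = (μ + d i) * v i := by
    rw [Matrix.map_sub _ Complex.ofReal_sub, sub_mulVec, diagonal_map Complex.ofReal_zero,
      diagonal_mulVec_eq_mul] at hv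
    have hvi := congrFun hv i
    simp only [Pi.sub_apply, Pi.mul_apply, Pi.smul_apply, smul_eq_mul] at hvi
    linear_combination hvi
  calc d i * ‖v i‖ ≤ ‖μ + d i‖ * ‖v i‖ := by
        gcongr
        refine le_trans ?_ (Complex.re_le_norm _)
        simpa using hμre
    _ = ‖(M.map Complex.ofReal *ᵥ v) i‖ := by rw [hMv, norm_mul]
    _ ≤ _ := norm_map_ofReal_mulVec_apply_le hM v i

theorem exists_re_nonneg_mem_spectrum_of_le_mulVec (hM : ∀ i j, 0 ≤ M i j) {w : n → ℝ}
    (hw : 0 ≤ w) (hw0 : w ≠ 0) (hdw : d * w ≤ M *ᵥ w) :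
    ∃ μ ∈ spectrum ℂ ((M - diagonal d).map Complex.ofReal), 0 ≤ μ.re :=
  exists_re_nonneg_mem_spectrum_of_mulVec_nonneg (fun i j hij ↦ by simpa [hij] using hM i j) hw
    hw0 (by rwa [sub_mulVec, diagonal_mulVec_eq_mul, sub_nonneg])

theorem exists_le_mulVec_of_one_le_norm_mem_spectrum (hd : ∀ i, 0 < d i)
    (hM : ∀ i j, 0 ≤ M i j) {μ : ℂ}
    (hμ : μ ∈ spectrum ℂ ((M * diagonal d⁻¹).map Complex.ofReal)) (hμ1 : 1 ≤ ‖μ‖) :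
    ∃ w, 0 ≤ w ∧ w ≠ 0 ∧ d * w ≤ M *ᵥ w := by
  obtain ⟨v, hv0, hv⟩ := mem_spectrum_iff_exists_mulVec_eq_smul.mp hμ
  set x : n → ℂ := fun j ↦ (d j : ℂ)⁻¹ * v j
  have hx : (M * diagonal d⁻¹).map Complex.ofReal *ᵥ v = M.map Complex.ofReal *ᵥ x := by
    ext i
    simp [mulVec, dotProduct, mul_diagonal, x, mul_assoc]
  refine ⟨fun j ↦ ‖x j‖, fun j ↦ norm_nonneg _, fun h ↦ hv0 (funext fun j ↦ ?_), fun i ↦ ?_⟩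
  · simpa [x, (hd j).ne'] using congrFun h j
  · calc d i * ‖x i‖ = ‖v i‖ := by
          simp only [x, norm_mul, norm_inv, Complex.norm_real, Real.norm_of_nonneg (hd i).le]
          field_simp [(hd i).ne']
      _ ≤ ‖μ‖ * ‖v i‖ := le_mul_of_one_le_left (norm_nonneg _) hμ1
      _ = ‖(M.map Complex.ofReal *ᵥ x) i‖ := by rw [← hx, hv, Pi.smul_apply, norm_smul]
      _ ≤ _ := norm_map_ofReal_mulVec_apply_le hM x i

theorem exists_one_le_norm_mem_spectrum_of_le_mulVec (hd : ∀ i, 0 < d i)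
    (hM : ∀ i j, 0 ≤ M i j) {w : n → ℝ} (hw : 0 ≤ w) (hw0 : w ≠ 0) (hdw : d * w ≤ M *ᵥ w) :
    ∃ μ ∈ spectrum ℂ ((M * diagonal d⁻¹).map Complex.ofReal), 1 ≤ ‖μ‖ := by
  have hB : ∀ i j, 0 ≤ (M * diagonal d⁻¹) i j := fun i j ↦ by
    rw [mul_diagonal]; exact mul_nonneg (hM i j) (inv_nonneg.mpr (hd j).le)
  have hdw0 : d * w ≠ 0 := fun h ↦ hw0 (funext fun j ↦ by
    simpa [(hd j).ne'] using congrFun h j)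
  have hcancel : d⁻¹ * (d * w) = w := funext fun j ↦ by simp [(hd j).ne']
  refine exists_le_norm_mem_spectrum_of_smul_le_mulVec hB (mul_nonneg (fun j ↦ (hd j).le) hw)
    hdw0 zero_le_one ?_
  rwa [one_smul, ← mulVec_mulVec, diagonal_mulVec_eq_mul, hcancel]

theorem exists_re_nonneg_mem_spectrum_sub_diagonal_iff (hM : ∀ i j, 0 ≤ M i j) :
    (∃ μ ∈ spectrum ℂ ((M - diagonal d).map Complex.ofReal), 0 ≤ μ.re) ↔
      ∃ w, 0 ≤ w ∧ w ≠ 0 ∧ d * w ≤ M *ᵥ w :=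
  ⟨fun ⟨_, hμ, hμre⟩ ↦ exists_le_mulVec_of_re_nonneg_mem_spectrum hM hμ hμre,
    fun ⟨_, hw, hw0, hdw⟩ ↦ exists_re_nonneg_mem_spectrum_of_le_mulVec hM hw hw0 hdw⟩

theorem exists_one_le_norm_mem_spectrum_mul_diagonal_inv_iff (hd : ∀ i, 0 < d i)
    (hM : ∀ i j, 0 ≤ M i j) :
    (∃ μ ∈ spectrum ℂ ((M * diagonal d⁻¹).map Complex.ofReal), 1 ≤ ‖μ‖) ↔
      ∃ w, 0 ≤ w ∧ w ≠ 0 ∧ d * w ≤ M *ᵥ w :=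
  ⟨fun ⟨_, hμ, hμ1⟩ ↦ exists_le_mulVec_of_one_le_norm_mem_spectrum hd hM hμ hμ1,
    fun ⟨_, hw, hw0, hdw⟩ ↦ exists_one_le_norm_mem_spectrum_of_le_mulVec hd hM hw hw0 hdw⟩

end DiagonalAndNonneg

theorem stmt_5_general {N : ℕ} (A M : Matrix (Fin N) (Fin N) ℝ)
    (hAdiag : ∀ i j, i ≠ j → A i j = 0) (hApos : ∀ i, 0 < A i i)
    (hMnonneg : ∀ i j, 0 ≤ M i j) :
    IsHurwitz (-(A - M)) ↔
      ∀ μ ∈ spectrum ℂ ((M * A⁻¹).map Complex.ofReal), ‖μ‖ < 1 := by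
  obtain ⟨d, rfl⟩ : ∃ d, A = diagonal d :=
    ⟨A.diag, (IsDiag.diagonal_diag fun i j hij ↦ hAdiag i j hij).symm⟩
  have hd : ∀ i, 0 < d i := by simpa using hApos
  rw [inv_diagonal_of_ne_zero fun i ↦ (hd i).ne', neg_sub, IsHurwitz, ← not_iff_not]
  push Not
  rw [exists_re_nonneg_mem_spectrum_sub_diagonal_iff hMnonneg,
    exists_one_le_norm_mem_spectrum_mul_diagonal_inv_iff hd hMnonneg]

/-- `-(A-M)` is Hurwitz if and only if the spectral radius of `M A⁻¹`
is strictly less than `1`, i.e., every (complex) eigenvalue of `M A⁻¹` has modulus `< 1`. -/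
theorem stmt_5 {N : ℕ} (A M : Matrix (Fin N) (Fin N) ℝ)
    (hAdiag : ∀ i j, i ≠ j → A i j = 0) (hApos : ∀ i, 0 < A i i)
    (hMnonneg : ∀ i j, 0 ≤ M i j) (hMdiag : ∀ i, M i i = 0) :
    IsHurwitz (-(A - M)) ↔
      ∀ μ ∈ spectrum ℂ ((M * A⁻¹).map Complex.ofReal), ‖μ‖ < 1 :=
  stmt_5_general A M hAdiag hApos hMnonneg
end

section
/- Suppose −(A−M) is Hurwitz and let u = (A−M)^{−1}𝟙. Then for every integer k ≥ 1 and every index i, one has ((MA^{−1})^k)_{ii} < 1 and a_i · u_i ≥ 1 / (1 − ((MA^{−1})^k)_{ii}). -/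
/-!
`Q = A - M` has nonpositive off-diagonal entries and spectrum in the open right half-plane, so it
is a nonsingular M-matrix: for small `t > 0` the matrix `D = 1 - t • Q` is entrywise nonnegative
with spectral radius `< 1`, hence `Q⁻¹ = t • ∑ₖ Dᵏ ≥ 0` and `u ≥ 0`. Then `v = A u ≥ 0` satisfies
`v = 𝟙 + B v` with `B = M A⁻¹ ≥ 0`; iterating gives `Bᵏ v ≤ v - 𝟙` for `k ≥ 1`, and keeping only
the diagonal term of `(Bᵏ v)ᵢ` yields `(Bᵏ)ᵢᵢ vᵢ ≤ vᵢ - 1`, i.e. `(1 - (Bᵏ)ᵢᵢ) vᵢ ≥ 1`.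
-/

open Matrix

open Filter Topology
open scoped NNReal ENNReal

theorem summable_norm_pow_of_spectralRadius_lt_one {A : Type*} [NormedRing A]
    [NormedAlgebra ℂ A] [CompleteSpace A] {a : A} (ha : spectralRadius ℂ a < 1) :
    Summable fun k => ‖a ^ k‖ := by
  obtain ⟨r, hr1, hra⟩ : ∃ r : ℝ≥0, 1 < (r : ℝ≥0∞) ∧ (r : ℝ≥0∞) < (spectralRadius ℂ a)⁻¹ :=
    ENNReal.lt_iff_exists_nnreal_btwn.mp (ENNReal.one_lt_inv.mpr ha)
  have hr_pos : 0 < r := by exact_mod_cast zero_lt_one.trans hr1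
  -- `z ↦ (1 - z • a)⁻¹` is holomorphic on the ball of radius `1 / spectralRadius ℂ a`, so its
  -- power series `∑ zᵏ aᵏ` converges there, in particular at `z = 1`.
  have hps := (spectrum.differentiableOn_inverse_one_sub_smul hra).hasFPowerSeriesOnBall hr_pos
  have hradius :=
    ((spectrum.hasFPowerSeriesOnBall_inverse_one_sub_smul ℂ a).exchange_radius hps).r_le
  simpa using FormalMultilinearSeries.summable_norm_mul_pow _ (hr1.trans_le hradius)

theorem Complex.eventually_norm_one_sub_ofReal_mul_lt_one {z : ℂ} (hz : 0 < z.re) :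
    ∀ᶠ t : ℝ in 𝓝[>] 0, ‖1 - (t : ℂ) * z‖ < 1 := by
  have hlim : Tendsto (fun t : ℝ => t * normSq z) (𝓝[>] 0) (𝓝 0) :=
    ((continuous_mul_const _).tendsto' 0 0 (zero_mul _)).mono_left nhdsWithin_le_nhds
  filter_upwards [eventually_mem_nhdsWithin,
    hlim.eventually (gt_mem_nhds (by linarith : (0 : ℝ) < 2 * z.re))] with t (ht : 0 < t) hsmall
  have hsq : ‖1 - (t : ℂ) * z‖ ^ 2 = 1 - t * (2 * z.re - t * normSq z) := by
    rw [Complex.sq_norm, normSq_apply, normSq_apply]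
    simp only [sub_re, one_re, mul_re, ofReal_re, ofReal_im, zero_mul, sub_zero, sub_im, one_im,
      mul_im, add_zero, zero_sub]
    ring
  have hsq_lt : ‖1 - (t : ℂ) * z‖ ^ 2 < 1 ^ 2 := by
    rw [hsq]
    nlinarith
  exact lt_of_pow_lt_pow_left₀ 2 zero_le_one hsq_lt

theorem Matrix.mulVec_le_mulVec_of_nonneg_s8 {m n R : Type*} [Fintype n] [Semiring R]
    [PartialOrder R] [IsOrderedRing R] {B : Matrix m n R} (hB : ∀ i j, 0 ≤ B i j)
    {x y : n → R} (hxy : x ≤ y) : B *ᵥ x ≤ B *ᵥ y :=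
  fun i => dotProduct_le_dotProduct_of_nonneg_left hxy (hB i)

theorem Matrix.pow_mulVec_le_sub_one {n R : Type*} [Fintype n] [DecidableEq n] [Ring R]
    [PartialOrder R] [IsOrderedRing R] {B : Matrix n n R} (hB : ∀ i j, 0 ≤ B i j)
    {v : n → R} (hv : v = 1 + B *ᵥ v) {k : ℕ} (hk : 1 ≤ k) : B ^ k *ᵥ v ≤ v - 1 := by
  have hBv : B *ᵥ v = v - 1 := eq_sub_of_add_eq' hv.symm
  induction k, hk using Nat.le_induction with
  | base => rw [pow_one, hBv]
  | succ k _ ih =>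
    calc B ^ (k + 1) *ᵥ v = B ^ k *ᵥ (B *ᵥ v) := by rw [pow_succ, mulVec_mulVec]
      _ ≤ B ^ k *ᵥ v :=
        mulVec_le_mulVec_of_nonneg_s8 (pow_apply_nonneg hB k) (hBv ▸ sub_le_self _ zero_le_one)
      _ ≤ v - 1 := ih

theorem Matrix.pow_apply_self_lt_one_and_one_div_le {n : Type*} [Fintype n] [DecidableEq n]
    {B : Matrix n n ℝ} (hB : ∀ i j, 0 ≤ B i j) {v : n → ℝ} (hv_nonneg : 0 ≤ v)
    (hv : v = 1 + B *ᵥ v) {k : ℕ} (hk : 1 ≤ k) (i : n) :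
    (B ^ k) i i < 1 ∧ 1 / (1 - (B ^ k) i i) ≤ v i := by
  have hdiag : (B ^ k) i i * v i ≤ v i - 1 :=
    calc (B ^ k) i i * v i ≤ (B ^ k *ᵥ v) i :=
          Finset.single_le_sum (f := fun j => (B ^ k) i j * v j)
            (fun j _ => mul_nonneg (pow_apply_nonneg hB k i j) (hv_nonneg j)) (Finset.mem_univ i)
      _ ≤ v i - 1 := pow_mulVec_le_sub_one hB hv hk i
  have hc : 0 ≤ (B ^ k) i i := pow_apply_nonneg hB k i i
  have hvi : 0 ≤ v i := hv_nonneg i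
  have hlt : (B ^ k) i i < 1 := by nlinarith
  refine ⟨hlt, ?_⟩
  rw [div_le_iff₀ (sub_pos.mpr hlt)]
  nlinarith

section ComplexSpectrum

attribute [local instance] Matrix.linftyOpNormedRing Matrix.linftyOpNormedAlgebra

variable {n : Type*} [Fintype n] [DecidableEq n]

theorem Matrix.linfty_opNorm_map_ofReal (X : Matrix n n ℝ) : ‖X.map Complex.ofReal‖ = ‖X‖ := by
  simp [linfty_opNorm_def]

theorem Matrix.summable_pow_of_spectralRadius_lt_one {X : Matrix n n ℝ}
    (hX : spectralRadius ℂ (X.map Complex.ofReal) < 1) : Summable (X ^ ·) := by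
  refine Summable.of_norm ?_
  have hpow (k : ℕ) : X.map Complex.ofReal ^ k = (X ^ k).map Complex.ofReal :=
    (Matrix.map_pow X Complex.ofRealHom k).symm
  simpa [hpow, linfty_opNorm_map_ofReal] using summable_norm_pow_of_spectralRadius_lt_one hX

theorem Matrix.inv_apply_nonneg_of_one_sub_smul {Q : Matrix n n ℝ} {t : ℝ} (ht : 0 ≤ t)
    (hD : ∀ i j, 0 ≤ (1 - t • Q) i j)
    (hρ : spectralRadius ℂ ((1 - t • Q).map Complex.ofReal) < 1) :
    IsUnit Q.det ∧ ∀ i j, 0 ≤ Q⁻¹ i j := by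
  have hsum := summable_pow_of_spectralRadius_lt_one hρ
  have hright : Q * (t • ∑' k, (1 - t • Q) ^ k) = 1 := by
    rw [mul_smul_comm, ← smul_mul_assoc]
    simpa using hsum.one_sub_mul_tsum_pow
  refine ⟨isUnit_det_of_right_inverse hright, fun i j => ?_⟩
  have hentry : (∑' k, (1 - t • Q) ^ k : Matrix n n ℝ) i j
      = ∑' k, ((1 - t • Q) ^ k : Matrix n n ℝ) i j :=
    (entryLinearMap ℝ ℝ i j).toContinuousLinearMap.map_tsum hsum
  rw [inv_eq_right_inv hright, smul_apply, hentry]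
  exact mul_nonneg ht (tsum_nonneg fun k => pow_apply_nonneg hD k i j)

theorem Matrix.exists_one_sub_smul_nonneg_spectralRadius_lt_one {Q : Matrix n n ℝ}
    (hQ : ∀ i j, i ≠ j → Q i j ≤ 0)
    (hspec : ∀ z ∈ spectrum ℂ (Q.map Complex.ofReal), 0 < z.re) :
    ∃ t : ℝ, 0 < t ∧ (∀ i j, 0 ≤ (1 - t • Q) i j) ∧
      spectralRadius ℂ ((1 - t • Q).map Complex.ofReal) < 1 := by
  have hdiag : ∀ᶠ t : ℝ in 𝓝[>] 0, ∀ i, t * Q i i < 1 := by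
    refine eventually_all.mpr fun i => ?_
    have hlim : Tendsto (fun t : ℝ => t * Q i i) (𝓝[>] 0) (𝓝 0) :=
      ((continuous_mul_const _).tendsto' 0 0 (zero_mul _)).mono_left nhdsWithin_le_nhds
    exact hlim.eventually (gt_mem_nhds one_pos)
  have heig : ∀ᶠ t : ℝ in 𝓝[>] 0,
      ∀ z ∈ spectrum ℂ (Q.map Complex.ofReal), ‖1 - (t : ℂ) * z‖ < 1 :=
    ((finite_spectrum _).eventually_all).mpr fun z hz =>
      Complex.eventually_norm_one_sub_ofReal_mul_lt_one (hspec z hz)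
  obtain ⟨t, ht, hdiag, heig⟩ := (eventually_mem_nhdsWithin.and (hdiag.and heig)).exists
  refine ⟨t, ht, fun i j => ?_, ?_⟩
  · rcases eq_or_ne i j with rfl | hij
    · simpa using (hdiag i).le
    · simpa [one_apply_ne hij] using mul_nonpos_of_nonneg_of_nonpos (le_of_lt ht) (hQ i j hij)
  have hmap : (1 - t • Q).map Complex.ofReal = algebraMap ℂ _ 1 -
      (Units.mk0 (t : ℂ) (by exact_mod_cast (ne_of_gt ht))) • Q.map Complex.ofReal := by
    ext i j
    simp [one_apply, apply_ite Complex.ofReal]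
  have hmem : ∀ μ ∈ spectrum ℂ ((1 - t • Q).map Complex.ofReal), ‖μ‖₊ < 1 := by
    intro μ hμ
    rw [hmap, ← spectrum.singleton_sub_eq, spectrum.unit_smul_eq_smul] at hμ
    obtain ⟨_, rfl, _, ⟨z, hz, rfl⟩, rfl⟩ := hμ
    rw [← NNReal.coe_lt_coe]
    simpa using heig z hz
  rcases (spectrum ℂ ((1 - t • Q).map Complex.ofReal)).eq_empty_or_nonempty with h | h
  · simp [spectralRadius, h]
  · simpa using
      spectrum.spectralRadius_lt_of_forall_lt_of_nonempty h (r := 1) (by simpa using hmem)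

end ComplexSpectrum

theorem Matrix.inv_apply_nonneg_of_offDiag_nonpos {n : Type*} [Fintype n] [DecidableEq n]
    {Q : Matrix n n ℝ} (hQ : ∀ i j, i ≠ j → Q i j ≤ 0)
    (hspec : ∀ z ∈ spectrum ℂ (Q.map Complex.ofReal), 0 < z.re) :
    IsUnit Q.det ∧ ∀ i j, 0 ≤ Q⁻¹ i j := by
  obtain ⟨t, ht, hD, hρ⟩ := exists_one_sub_smul_nonneg_spectralRadius_lt_one hQ hspec
  exact inv_apply_nonneg_of_one_sub_smul (le_of_lt ht) hD hρ

theorem IsHurwitz.re_pos_of_mem_spectrum_neg {n : Type*} [Fintype n] [DecidableEq n]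
    {Q : Matrix n n ℝ} (h : IsHurwitz (-Q)) :
    ∀ z ∈ spectrum ℂ (Q.map Complex.ofReal), 0 < z.re := by
  intro z hz
  have hneg : -z ∈ spectrum ℂ ((-Q).map Complex.ofReal) := by
    rwa [Matrix.map_neg _ Complex.ofReal_neg, ← spectrum.neg_eq, Set.neg_mem_neg]
  simpa using h (-z) hneg

theorem stmt_8_general {N : ℕ} (A M : Matrix (Fin N) (Fin N) ℝ)
    (hAdiag : ∀ i j, i ≠ j → A i j = 0) (hApos : ∀ i, 0 < A i i)
    (hMnonneg : ∀ i j, 0 ≤ M i j)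
    (hHur : IsHurwitz (-(A - M))) :
    ∀ k : ℕ, 1 ≤ k → ∀ i,
      ((M * A⁻¹) ^ k) i i < 1 ∧
      1 / (1 - ((M * A⁻¹) ^ k) i i) ≤ A i i * ((A - M)⁻¹ *ᵥ (fun _ : Fin N => (1 : ℝ))) i := by
  obtain ⟨hdet, hinv⟩ := inv_apply_nonneg_of_offDiag_nonpos
    (fun i j hij => by simpa [hAdiag i j hij] using hMnonneg i j) hHur.re_pos_of_mem_spectrum_neg
  have hA : diagonal (fun i => A i i) = A := (isDiag_iff_diagonal_diag A).mp hAdiag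
  set u := (A - M)⁻¹ *ᵥ (fun _ : Fin N => (1 : ℝ)) with hu_def
  have hu : 0 ≤ u := fun i => dotProduct_nonneg_of_nonneg (hinv i) (fun _ => zero_le_one)
  have hAinv : diagonal (fun i => (A i i)⁻¹) * A = 1 := by
    ext i j
    rw [diagonal_mul, one_apply]
    split_ifs with hij
    · exact hij ▸ inv_mul_cancel₀ (hApos i).ne'
    · rw [hAdiag i j hij, mul_zero]
  have hB : ∀ i j, 0 ≤ (M * A⁻¹) i j := fun i j => by
    rw [inv_eq_left_inv hAinv, mul_diagonal]
    exact mul_nonneg (hMnonneg i j) (inv_nonneg.mpr (hApos j).le)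
  have hAu (j : Fin N) : (A *ᵥ u) j = A j j * u j := by
    rw [← hA, mulVec_diagonal, diagonal_apply_eq]
  have hv : A *ᵥ u = 1 + (M * A⁻¹) *ᵥ (A *ᵥ u) :=
    calc A *ᵥ u = (A - M) *ᵥ u + M *ᵥ u := by rw [sub_mulVec]; abel
      _ = 1 + (M * A⁻¹) *ᵥ (A *ᵥ u) := by
        rw [hu_def, mulVec_mulVec, mul_nonsing_inv _ hdet, one_mulVec, ← mulVec_mulVec,
          mulVec_mulVec (M := A⁻¹), inv_eq_left_inv hAinv, hAinv, one_mulVec]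
        rfl
  intro k hk i
  rw [← hAu]
  exact pow_apply_self_lt_one_and_one_div_le hB
    (fun j => (hAu j).symm ▸ mul_nonneg (hApos j).le (hu j)) hv hk i

/-- If `-(A-M)` is Hurwitz and `u = (A-M)⁻¹ 𝟙`, then for every `k ≥ 1` and
every index `i`, `((M A⁻¹)ᵏ)ᵢᵢ < 1` and `aᵢ uᵢ ≥ 1 / (1 - ((M A⁻¹)ᵏ)ᵢᵢ)`. -/
theorem stmt_8 {N : ℕ} (A M : Matrix (Fin N) (Fin N) ℝ)
    (hAdiag : ∀ i j, i ≠ j → A i j = 0) (hApos : ∀ i, 0 < A i i)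
    (hMnonneg : ∀ i j, 0 ≤ M i j) (hMdiag : ∀ i, M i i = 0)
    (hHur : IsHurwitz (-(A - M))) :
    ∀ k : ℕ, 1 ≤ k → ∀ i,
      ((M * A⁻¹) ^ k) i i < 1 ∧
      1 / (1 - ((M * A⁻¹) ^ k) i i) ≤ A i i * ((A - M)⁻¹ *ᵥ (fun _ : Fin N => (1 : ℝ))) i :=
  stmt_8_general A M hAdiag hApos hMnonneg hHur
end

section
/- Suppose −(A−M) is Hurwitz, let u = (A−M)^{−1}𝟙 and u_max = max_i u_i. Let i ≠ j with M_{ij} = 0, let m > 0, set σ = e_jᵀ(A−M)^{−1}e_i, and suppose that −(A − M − m e_i e_jᵀ) is also Hurwitz and that m·σ < 1. Then the vector ū = (A − M − m e_i e_jᵀ)^{−1}𝟙 satisfies ū = u + (m/(1 − m·σ))·(A−M)^{−1}e_i·u_j, and ū ≤ u_max·𝟙 holds if and only if (m/(1 − m·σ))·(A−M)^{−1}e_i·u_j ≤ u_max·𝟙 − u. (Hence adding the edge (j → i) with weight m is a scalable change if and only if this inequality holds.) -/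
/-!
A Hurwitz matrix has no zero eigenvalue, so `A - M` and its perturbation are invertible. Adding the
edge changes `A - M` by the rank-one matrix `m eᵢ eⱼᵀ`, so by Sherman–Morrison the new solution is
the old one plus a multiple of `(A - M)⁻¹ eᵢ`, the multiple being fixed by the `j`-th coordinate.
The inequality `ū ≤ u_max 𝟙` then reads off coordinatewise.
-/

open Matrix

theorem IsHurwitz.isUnit {n : Type*} [Fintype n] [DecidableEq n] {B : Matrix n n ℝ}
    (hB : IsHurwitz B) : IsUnit B := by
  have hzero : (0 : ℂ) ∉ spectrum ℂ (B.map Complex.ofReal) := fun h => by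
    simpa using hB 0 h
  have hdet : (B.map Complex.ofReal).det = (B.det : ℂ) := (Complex.ofRealHom.map_det B).symm
  rw [spectrum.zero_notMem_iff, isUnit_iff_isUnit_det, hdet, isUnit_iff_ne_zero,
    Complex.ofReal_ne_zero] at hzero
  exact (isUnit_iff_isUnit_det B).mpr hzero.isUnit

theorem Matrix.inv_sub_single_mulVec {n K : Type*} [Fintype n] [DecidableEq n] [Field K]
    {B : Matrix n n K} (hB : IsUnit B.det) {i j : n} {m : K}
    (hC : IsUnit (B - single i j m).det) (hσ : 1 - m * B⁻¹ j i ≠ 0) (y : n → K) :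
    (B - single i j m)⁻¹ *ᵥ y =
      B⁻¹ *ᵥ y + (m / (1 - m * B⁻¹ j i) * (B⁻¹ *ᵥ y) j) • (B⁻¹ *ᵥ Pi.single i 1) := by
  set x := B⁻¹ *ᵥ y
  set v := B⁻¹ *ᵥ Pi.single i 1
  set c := m / (1 - m * B⁻¹ j i) * x j
  have hBx : B *ᵥ x = y := by rw [mulVec_mulVec, mul_nonsing_inv B hB, one_mulVec]
  have hBv : B *ᵥ v = Pi.single i 1 := by rw [mulVec_mulVec, mul_nonsing_inv B hB, one_mulVec]
  have hvj : v j = B⁻¹ j i := by simp [v]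
  -- `c` is chosen so that the rank-one correction `c • eᵢ` cancels `m (x + c v)ⱼ eᵢ`
  have hc : m * (x j + c * v j) = c := by
    rw [hvj]; simp only [c]; field_simp; ring
  suffices h : (B - single i j m) *ᵥ (x + c • v) = y by
    rw [← h, mulVec_mulVec, nonsing_inv_mul _ hC, one_mulVec]
  rw [sub_mulVec, mulVec_add, mulVec_smul, hBx, hBv, single_mulVec, Pi.add_apply,
    Pi.smul_apply, smul_eq_mul, hc, ← Pi.single_smul, smul_eq_mul, mul_one]
  exact add_sub_cancel_right y _

theorem stmt_13_general {N : ℕ} (hN : 0 < N) (A M : Matrix (Fin N) (Fin N) ℝ)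
    (hHur : IsHurwitz (-(A - M)))
    (i j : Fin N) (m : ℝ)
    (hHur2 : IsHurwitz (-(A - M - Matrix.single i j m)))
    (hσ : m * (A - M)⁻¹ j i < 1) :
    haveI : Nonempty (Fin N) := Fin.pos_iff_nonempty.mp hN
    let u : Fin N → ℝ := (A - M)⁻¹ *ᵥ (fun _ => (1 : ℝ))
    let umax : ℝ := Finset.univ.sup' Finset.univ_nonempty u
    let ubar : Fin N → ℝ := (A - M - Matrix.single i j m)⁻¹ *ᵥ (fun _ => (1 : ℝ))
    ubar = u + (m / (1 - m * (A - M)⁻¹ j i) * u j) • ((A - M)⁻¹ *ᵥ Pi.single i 1) ∧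
    ((∀ p, ubar p ≤ umax) ↔
      ∀ p, m / (1 - m * (A - M)⁻¹ j i) * u j * ((A - M)⁻¹ *ᵥ Pi.single i 1) p ≤
        umax - u p) := by
  intro u umax ubar
  have hB : IsUnit (A - M).det := by simpa using (isUnit_iff_isUnit_det _).mp hHur.isUnit.neg
  have hC : IsUnit (A - M - single i j m).det := by
    simpa using (isUnit_iff_isUnit_det _).mp hHur2.isUnit.neg
  have hubar : ubar = u + (m / (1 - m * (A - M)⁻¹ j i) * u j) • ((A - M)⁻¹ *ᵥ Pi.single i 1) :=
    inv_sub_single_mulVec hB hC (by linarith) _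
  refine ⟨hubar, forall_congr' fun p => ?_⟩
  rw [hubar, Pi.add_apply, Pi.smul_apply, smul_eq_mul, le_sub_iff_add_le']

/-- (Addition of an edge: necessary and sufficient condition.) Suppose
`-(A-M)` is Hurwitz, `u = (A-M)⁻¹ 𝟙`, `u_max = maxᵢ uᵢ`. Let `i ≠ j`, `Mᵢⱼ = 0`, `m > 0`,
`σ = eⱼᵀ (A-M)⁻¹ eᵢ`, and suppose `-(A - M - m eᵢ eⱼᵀ)` is Hurwitz with `m σ < 1`. Then
`ū = (A - M - m eᵢ eⱼᵀ)⁻¹ 𝟙 = u + (m/(1 - m σ)) uⱼ · (A-M)⁻¹ eᵢ`, and `ū ≤ u_max 𝟙` iff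
`(m/(1 - m σ)) uⱼ · (A-M)⁻¹ eᵢ ≤ u_max 𝟙 - u`. -/
theorem stmt_13 {N : ℕ} (hN : 0 < N) (A M : Matrix (Fin N) (Fin N) ℝ)
    (hAdiag : ∀ p q, p ≠ q → A p q = 0) (hApos : ∀ p, 0 < A p p)
    (hMnonneg : ∀ p q, 0 ≤ M p q) (hMdiag : ∀ p, M p p = 0)
    (hHur : IsHurwitz (-(A - M)))
    (i j : Fin N) (hij : i ≠ j) (hMij : M i j = 0) (m : ℝ) (hm : 0 < m)
    (hHur2 : IsHurwitz (-(A - M - Matrix.single i j m)))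
    (hσ : m * (A - M)⁻¹ j i < 1) :
    haveI : Nonempty (Fin N) := Fin.pos_iff_nonempty.mp hN
    let u : Fin N → ℝ := (A - M)⁻¹ *ᵥ (fun _ => (1 : ℝ))
    let umax : ℝ := Finset.univ.sup' Finset.univ_nonempty u
    let ubar : Fin N → ℝ := (A - M - Matrix.single i j m)⁻¹ *ᵥ (fun _ => (1 : ℝ))
    ubar = u + (m / (1 - m * (A - M)⁻¹ j i) * u j) • ((A - M)⁻¹ *ᵥ Pi.single i 1) ∧
    ((∀ p, ubar p ≤ umax) ↔
      ∀ p, m / (1 - m * (A - M)⁻¹ j i) * u j * ((A - M)⁻¹ *ᵥ Pi.single i 1) p ≤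
        umax - u p) :=
  stmt_13_general hN A M hHur i j m hHur2 hσ
end

section
/- Suppose −(A−M) is Hurwitz, let i ≠ j with M_{ij} = 0 and m > 0, and suppose −(A − M − m e_i e_jᵀ) is also Hurwitz. Then (A − M − m e_i e_jᵀ)^{−1}𝟙 ≥ (A−M)^{−1}𝟙 entrywise; that is, adding an edge can never decrease the vector u = (A−M)^{−1}𝟙 and hence can never improve the robustness bound. -/
open Matrix

/-!
`B := A - M` and `B' := B - m eᵢ eⱼᵀ` are Z-matrices (nonpositive off the diagonal) whose
eigenvalues have positive real part, so both have entrywise nonnegative inverses. For this write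
`B = s (1 - Q)`: once `s` dominates the diagonal, `Q ≥ 0`, and an eigenvalue `ν` of `B` becomes
the eigenvalue `1 - ν / s` of `Q`, which lies in the open unit disc as soon as
`|ν|² < 2 s Re ν`. By Gelfand's formula `Qᵏ → 0`, hence `B⁻¹ = s⁻¹ ∑ Qᵏ ≥ 0`. The resolvent
identity `B'⁻¹ - B⁻¹ = B'⁻¹ (B - B') B⁻¹` exhibits the difference as a product of nonnegative
matrices.
-/

open Filter Topology

section SpectralRadius

variable {A : Type*} [NormedRing A] [NormedAlgebra ℂ A] [CompleteSpace A]

theorem tendsto_pow_atTop_nhds_zero_of_forall_spectrum_norm_lt_one {a : A}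
    (h : ∀ z ∈ spectrum ℂ a, ‖z‖ < 1) : Tendsto (a ^ ·) atTop (𝓝 0) := by
  rcases subsingleton_or_nontrivial A with hA | hA
  · simp [Subsingleton.elim _ (0 : A)]
  have hρ : spectralRadius ℂ a < 1 := by
    simpa using
      spectrum.spectralRadius_lt_of_forall_lt a (r := 1) fun z hz => mod_cast h z hz
  obtain ⟨c, hc0, hρc, hc1⟩ := ENNReal.lt_iff_exists_real_btwn.1 hρ
  have hc1 : c < 1 := by simpa using hc1
  have hbound : ∀ᶠ n : ℕ in atTop, ‖a ^ n‖ ≤ c ^ n := by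
    have hgelfand := spectrum.pow_norm_pow_one_div_tendsto_nhds_spectralRadius a
    filter_upwards [hgelfand.eventually_lt_const hρc, eventually_ne_atTop 0] with n hn hn0
    rw [ENNReal.ofReal_lt_ofReal_iff', one_div] at hn
    calc ‖a ^ n‖ = (‖a ^ n‖ ^ (n⁻¹ : ℝ)) ^ n :=
          (Real.rpow_inv_natCast_pow (norm_nonneg _) hn0).symm
      _ ≤ c ^ n := pow_le_pow_left₀ (by positivity) hn.1.le n
  exact squeeze_zero_norm' hbound (tendsto_pow_atTop_nhds_zero_of_lt_one hc0 hc1)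

end SpectralRadius

theorem Complex.norm_one_sub_div_ofReal_lt_one {ν : ℂ} {s : ℝ} (hs : 0 < s)
    (h : ‖ν‖ ^ 2 < 2 * s * ν.re) : ‖1 - ν / s‖ < 1 := by
  have hs' : (s : ℂ) ≠ 0 := by exact_mod_cast hs.ne'
  rw [show 1 - ν / s = (s - ν) / s by field_simp, norm_div, Complex.norm_real,
    Real.norm_of_nonneg hs.le, div_lt_one hs]
  refine lt_of_pow_lt_pow_left₀ 2 hs.le ?_
  rw [Complex.sq_norm, Complex.normSq_apply] at h ⊢
  simp only [Complex.sub_re, Complex.ofReal_re, Complex.sub_im, Complex.ofReal_im]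
  nlinarith

theorem norm_lt_one_of_mem_spectrum_one_sub_inv_smul {A : Type*} [Ring A] [Algebra ℂ A] {a : A}
    {s : ℝ} (hs : 0 < s) (ha : ∀ ν ∈ spectrum ℂ a, ‖ν‖ ^ 2 < 2 * s * ν.re) :
    ∀ z ∈ spectrum ℂ (1 - (s : ℂ)⁻¹ • a), ‖z‖ < 1 := by
  intro z hz
  set u : ℂˣ := Units.mk0 (s : ℂ)⁻¹ (by simpa using hs.ne')
  rw [← map_one (algebraMap ℂ A), show (s : ℂ)⁻¹ • a = u • a from rfl,
    ← spectrum.singleton_sub_eq, spectrum.unit_smul_eq_smul] at hz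
  obtain ⟨_, rfl, _, ⟨ν, hν, rfl⟩, rfl⟩ := hz
  simpa [u, div_eq_inv_mul] using Complex.norm_one_sub_div_ofReal_lt_one hs (ha ν hν)

namespace Matrix

variable {n : Type*} [Fintype n] [DecidableEq n]

theorem tendsto_pow_of_forall_spectrum_map_ofReal_norm_lt_one {Q : Matrix n n ℝ}
    (h : ∀ z ∈ spectrum ℂ (Q.map Complex.ofReal), ‖z‖ < 1) :
    Tendsto (Q ^ ·) atTop (𝓝 0) := by
  -- any submultiplicative norm serves; the `L∞` operator norm induces the product topology
  let _ := Matrix.linftyOpNormedRing (n := n) (α := ℂ)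
  let _ := Matrix.linftyOpNormedAlgebra (R := ℂ) (n := n) (α := ℂ)
  have : CompleteSpace (Matrix n n ℂ) := FiniteDimensional.complete ℂ _
  have hc := tendsto_pow_atTop_nhds_zero_of_forall_spectrum_norm_lt_one h
  have hre := ((continuous_id.matrix_map Complex.continuous_re).tendsto 0).comp hc
  have hpow (k : ℕ) : Q.map Complex.ofReal ^ k = (Q ^ k).map Complex.ofReal :=
    (map_pow Complex.ofRealHom.mapMatrix Q k).symm
  convert hre using 1
  · ext k p q
    simp [hpow]
  · simp

theorem isUnit_one_sub_of_tendsto_pow {K : Type*} [Field K] [TopologicalSpace K]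
    [IsTopologicalRing K] [T2Space K] {Q : Matrix n n K} (h : Tendsto (Q ^ ·) atTop (𝓝 0)) :
    IsUnit (1 - Q) := by
  rw [← mulVec_injective_iff_isUnit]
  refine (injective_iff_map_eq_zero (mulVecLin (1 - Q))).2 fun v hv => ?_
  have hQv : Q *ᵥ v = v := by simpa [sub_mulVec, sub_eq_zero, eq_comm] using hv
  have hfix : ∀ k : ℕ, Q ^ k *ᵥ v = v := by
    intro k
    induction k with
    | zero => simp
    | succ k ih =>
      rw [pow_succ, ← mulVec_mulVec, hQv, ih]
  have hlim := ((continuous_id.matrix_mulVec (continuous_const (y := v))).tendsto 0).comp h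
  simp only [Function.comp_def, id, hfix, zero_mulVec] at hlim
  exact tendsto_nhds_unique tendsto_const_nhds hlim

theorem inv_one_sub_apply_nonneg_of_tendsto_pow {Q : Matrix n n ℝ} (hQ : ∀ p q, 0 ≤ Q p q)
    (h : Tendsto (Q ^ ·) atTop (𝓝 0)) (p q : n) : 0 ≤ (1 - Q)⁻¹ p q := by
  have hunit := (isUnit_iff_isUnit_det _).1 (isUnit_one_sub_of_tendsto_pow h)
  have hsum : ∀ k : ℕ, ∑ i ∈ Finset.range k, Q ^ i = (1 - Q)⁻¹ * (1 - Q ^ k) := by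
    intro k
    rw [← mul_neg_geom_sum, nonsing_inv_mul_cancel_left _ _ hunit]
  have hlim : Tendsto (fun k => ∑ i ∈ Finset.range k, Q ^ i) atTop (𝓝 ((1 - Q)⁻¹)) := by
    simpa [hsum] using ((tendsto_const_nhds (x := 1)).sub h).const_mul ((1 - Q)⁻¹)
  refine ge_of_tendsto' (((continuous_apply_apply p q).tendsto _).comp hlim) fun k => ?_
  show 0 ≤ (∑ i ∈ Finset.range k, Q ^ i) p q
  simpa only [sum_apply] using Finset.sum_nonneg fun i _ => pow_apply_nonneg hQ i p q

theorem re_pos_of_isHurwitz_neg {B : Matrix n n ℝ} (hB : IsHurwitz (-B)) {μ : ℂ}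
    (hμ : μ ∈ spectrum ℂ (B.map Complex.ofReal)) : 0 < μ.re := by
  have : -μ ∈ spectrum ℂ ((-B).map Complex.ofReal) := by
    rw [Matrix.map_neg _ Complex.ofReal_neg, ← spectrum.neg_eq]
    exact Set.neg_mem_neg.2 hμ
  simpa using hB _ this

theorem isUnit_det_of_isHurwitz_neg {B : Matrix n n ℝ} (hB : IsHurwitz (-B)) : IsUnit B.det := by
  have h0 : (0 : ℂ) ∉ spectrum ℂ (B.map Complex.ofReal) := fun h =>
    (re_pos_of_isHurwitz_neg hB h).ne rfl
  rw [spectrum.zero_mem_iff, not_not, isUnit_iff_isUnit_det, isUnit_iff_ne_zero] at h0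
  have hdet : (B.map Complex.ofReal).det = (B.det : ℂ) := (Complex.ofRealHom.map_det B).symm
  rw [hdet, Complex.ofReal_ne_zero] at h0
  exact isUnit_iff_ne_zero.2 h0

theorem inv_apply_nonneg_of_isHurwitz_neg {B : Matrix n n ℝ} (hoff : ∀ p q, p ≠ q → B p q ≤ 0)
    (hB : IsHurwitz (-B)) (p q : n) : 0 ≤ B⁻¹ p q := by
  obtain ⟨s, hs, hdiag, hspec⟩ : ∃ s : ℝ, 0 < s ∧ (∀ p, B p p ≤ s) ∧
      ∀ ν ∈ spectrum ℂ (B.map Complex.ofReal), ‖ν‖ ^ 2 < 2 * s * ν.re := by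
    refine ((eventually_gt_atTop 0).and
      ((eventually_all.2 fun p => eventually_ge_atTop (B p p)).and
      ((finite_spectrum _).eventually_all.2 fun ν hν => ?_))).exists
    have hre := re_pos_of_isHurwitz_neg hB hν
    filter_upwards [eventually_gt_atTop (‖ν‖ ^ 2 / (2 * ν.re))] with s hs
    rw [div_lt_iff₀ (by positivity)] at hs
    linarith
  set Q := 1 - s⁻¹ • B with hQ
  have hQ_nonneg : ∀ p q, 0 ≤ Q p q := by
    intro p q
    rcases eq_or_ne p q with rfl | hpq
    · simpa [hQ, inv_mul_le_one₀ hs] using hdiag p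
    · simpa [hQ, one_apply_ne hpq] using
        mul_nonpos_of_nonneg_of_nonpos (inv_nonneg.2 hs.le) (hoff p q hpq)
  have hQ_spec : ∀ z ∈ spectrum ℂ (Q.map Complex.ofReal), ‖z‖ < 1 := by
    have : Q.map Complex.ofReal = 1 - (s : ℂ)⁻¹ • B.map Complex.ofReal := by
      ext p q; simp [hQ, one_apply]; split_ifs <;> simp
    rw [this]
    exact norm_lt_one_of_mem_spectrum_one_sub_inv_smul hs hspec
  have hQ_pow := tendsto_pow_of_forall_spectrum_map_ofReal_norm_lt_one hQ_spec
  have hB_eq : B = Units.mk0 s hs.ne' • (1 - Q) := by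
    simp [hQ, Units.smul_def, smul_smul, hs.ne']
  have hB_inv : B⁻¹ = (Units.mk0 s hs.ne')⁻¹ • (1 - Q)⁻¹ := by
    rw [hB_eq]
    exact inv_smul' _ _ ((isUnit_iff_isUnit_det _).1 (isUnit_one_sub_of_tendsto_pow hQ_pow))
  rw [hB_inv, Units.smul_def, smul_apply, smul_eq_mul]
  exact mul_nonneg (by simp [hs.le]) (inv_one_sub_apply_nonneg_of_tendsto_pow hQ_nonneg hQ_pow p q)

theorem inv_apply_le_inv_apply_of_le {B B' : Matrix n n ℝ} (hB : IsUnit B.det)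
    (hB' : IsUnit B'.det) (hBinv : ∀ p q, 0 ≤ B⁻¹ p q) (hB'inv : ∀ p q, 0 ≤ B'⁻¹ p q)
    (hle : ∀ p q, B' p q ≤ B p q) (p q : n) : B⁻¹ p q ≤ B'⁻¹ p q := by
  have hres : B'⁻¹ - B⁻¹ = B'⁻¹ * (B - B') * B⁻¹ := by
    rw [Matrix.mul_sub, Matrix.nonsing_inv_mul _ hB', Matrix.sub_mul,
      Matrix.mul_nonsing_inv_cancel_right _ _ hB, Matrix.one_mul]
  rw [← sub_nonneg, ← sub_apply, hres, mul_apply]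
  refine Finset.sum_nonneg fun k _ => mul_nonneg ?_ (hBinv k q)
  rw [mul_apply]
  exact Finset.sum_nonneg fun l _ => mul_nonneg (hB'inv p l) (sub_nonneg.2 (hle l k))

end Matrix

theorem stmt_14_general {N : ℕ} (A M : Matrix (Fin N) (Fin N) ℝ)
    (hAdiag : ∀ p q, p ≠ q → A p q = 0)
    (hMnonneg : ∀ p q, 0 ≤ M p q)
    (hHur : IsHurwitz (-(A - M)))
    (i j : Fin N) (m : ℝ) (hm : 0 < m)
    (hHur2 : IsHurwitz (-(A - M - Matrix.single i j m))) :
    ∀ p, ((A - M)⁻¹ *ᵥ (fun _ : Fin N => (1 : ℝ))) p ≤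
      ((A - M - Matrix.single i j m)⁻¹ *ᵥ (fun _ : Fin N => (1 : ℝ))) p := by
  have hoff : ∀ p q, p ≠ q → (A - M) p q ≤ 0 := fun p q hpq => by
    simpa [hAdiag p q hpq] using hMnonneg p q
  have hsingle : ∀ p q, 0 ≤ Matrix.single i j m p q := fun p q => by
    rw [single_apply]; split_ifs <;> simp [hm.le]
  have hoff' : ∀ p q, p ≠ q → (A - M - Matrix.single i j m) p q ≤ 0 := fun p q hpq => by
    simpa using (hoff p q hpq).trans' (sub_le_self _ (hsingle p q))
  intro p
  simp only [mulVec, dotProduct, mul_one]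
  exact Finset.sum_le_sum fun q _ => inv_apply_le_inv_apply_of_le
    (isUnit_det_of_isHurwitz_neg hHur) (isUnit_det_of_isHurwitz_neg hHur2)
    (inv_apply_nonneg_of_isHurwitz_neg hoff hHur)
    (inv_apply_nonneg_of_isHurwitz_neg hoff' hHur2) (fun p q => sub_le_self _ (hsingle p q)) p q

/-- (Adding an edge can never improve robustness.) Suppose `-(A-M)` is
Hurwitz, `i ≠ j`, `Mᵢⱼ = 0`, `m > 0`, and `-(A - M - m eᵢ eⱼᵀ)` is Hurwitz. Then
`(A - M - m eᵢ eⱼᵀ)⁻¹ 𝟙 ≥ (A-M)⁻¹ 𝟙` entrywise. -/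
theorem stmt_14 {N : ℕ} (A M : Matrix (Fin N) (Fin N) ℝ)
    (hAdiag : ∀ p q, p ≠ q → A p q = 0) (hApos : ∀ p, 0 < A p p)
    (hMnonneg : ∀ p q, 0 ≤ M p q) (hMdiag : ∀ p, M p p = 0)
    (hHur : IsHurwitz (-(A - M)))
    (i j : Fin N) (hij : i ≠ j) (hMij : M i j = 0) (m : ℝ) (hm : 0 < m)
    (hHur2 : IsHurwitz (-(A - M - Matrix.single i j m))) :
    ∀ p, ((A - M)⁻¹ *ᵥ (fun _ : Fin N => (1 : ℝ))) p ≤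
      ((A - M - Matrix.single i j m)⁻¹ *ᵥ (fun _ : Fin N => (1 : ℝ))) p :=
  stmt_14_general A M hAdiag hMnonneg hHur i j m hm hHur2
end

section
/- Suppose −(A−M) is Hurwitz, let u = (A−M)^{−1}𝟙 and let k be an index with u_k = max_i u_i. Let i ≠ j with M_{ij} = 0 and m > 0, suppose −(A − M − m e_i e_jᵀ) is Hurwitz, and suppose ((A−M)^{−1})_{ki} > 0 (which holds in particular when there is a directed path from node i to node k in the graph of M). Then ū = (A − M − m e_i e_jᵀ)^{−1}𝟙 satisfies ū_k > max_i u_i; in particular, max_i ū_i > max_i u_i, so the addition of the edge is not scalable. -/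
/-!
Write `B = A - M` and `B̄ = B - m eᵢ eⱼᵀ`. Both are Z-matrices whose negatives are Hurwitz, hence
inverse-nonnegative M-matrices: `B + t • 1` is invertible for every `t ≥ 0`, its inverse is
nonnegative for large `t` by a Neumann series, and the set of good shifts is closed and can be
pushed down to `0`. So `ū = B̄⁻¹ 𝟙 ≥ 0`, and row `j` of `B̄ ū = 𝟙` forces `ū j > 0`.
Since `B ū = 𝟙 + m ū j eᵢ`, we get `ū k = u k + m ū j (B⁻¹)ₖᵢ > u k = max u`.
-/

open Matrix

namespace Matrix

variable {n : Type*} [Fintype n]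

theorem mul_apply_nonneg {X Y : Matrix n n ℝ} (hX : ∀ p q, 0 ≤ X p q) (hY : ∀ p q, 0 ≤ Y p q)
    (p q : n) : 0 ≤ (X * Y) p q :=
  Finset.sum_nonneg fun l _ => mul_nonneg (hX p l) (hY l q)

variable [DecidableEq n]

section Neumann

attribute [local instance] Matrix.linftyOpNormedRing Matrix.linftyOpNormedAlgebra

theorem linfty_opNorm_lt_one_of_nonneg {X : Matrix n n ℝ} (hX : ∀ p q, 0 ≤ X p q)
    (hrow : ∀ p, ∑ q, X p q < 1) : ‖X‖ < 1 := by
  rw [linfty_opNorm_def, ← NNReal.coe_one, NNReal.coe_lt_coe,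
    Finset.sup_lt_iff zero_lt_one]
  intro p _
  rw [← NNReal.coe_lt_coe, NNReal.coe_sum]
  simpa only [coe_nnnorm, Real.norm_of_nonneg (hX p _), NNReal.coe_one] using hrow p

/-- By the Neumann series `(1 - X)⁻¹ = ∑ Xʳ`. -/
theorem isUnit_det_one_sub_and_inv_nonneg {X : Matrix n n ℝ} (hX : ∀ p q, 0 ≤ X p q)
    (hrow : ∀ p, ∑ q, X p q < 1) :
    IsUnit (1 - X).det ∧ ∀ p q, 0 ≤ (1 - X)⁻¹ p q := by
  have hnorm := linfty_opNorm_lt_one_of_nonneg hX hrow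
  have hsum : Summable (X ^ ·) := summable_geometric_of_norm_lt_one hnorm
  have hinv : (∑' r : ℕ, X ^ r) * (1 - X) = 1 := geom_series_mul_neg X hnorm
  refine ⟨isUnit_det_of_left_inverse hinv, fun p q => ?_⟩
  rw [inv_eq_left_inv hinv]
  -- The `linfty` norm induces the product topology, up to defeq only.
  erw [tsum_apply hsum, tsum_apply (Pi.summable.1 hsum p)]
  exact tsum_nonneg fun r => pow_apply_nonneg hX r p q

end Neumann

theorem isUnit_det_sub_and_inv_nonneg {D P : Matrix n n ℝ} (hD : IsUnit D.det)
    (hDinv : ∀ p q, 0 ≤ D⁻¹ p q) (hP : ∀ p q, 0 ≤ P p q)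
    (hrow : ∀ p, ∑ q, (D⁻¹ * P) p q < 1) :
    IsUnit (D - P).det ∧ ∀ p q, 0 ≤ (D - P)⁻¹ p q := by
  obtain ⟨hunit, hnonneg⟩ := isUnit_det_one_sub_and_inv_nonneg (mul_apply_nonneg hDinv hP) hrow
  have hfac : D - P = D * (1 - D⁻¹ * P) := by
    rw [mul_sub, mul_one, ← Matrix.mul_assoc, mul_nonsing_inv _ hD, Matrix.one_mul]
  rw [hfac, det_mul, mul_inv_rev]
  exact ⟨hD.mul hunit, mul_apply_nonneg hnonneg hDinv⟩

theorem exists_inv_add_smul_one_nonneg {B : Matrix n n ℝ} (hoff : ∀ p q, p ≠ q → B p q ≤ 0) :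
    ∃ T : ℝ, 0 ≤ T ∧ ∀ p q, 0 ≤ (B + T • 1)⁻¹ p q := by
  set c : ℝ := ∑ p, ∑ q, |B p q|
  have hrow : ∀ p, ∑ q, |B p q| ≤ c := fun p =>
    Finset.single_le_sum (f := fun p => ∑ q, |B p q|)
      (fun p _ => Finset.sum_nonneg fun q _ => abs_nonneg _) (Finset.mem_univ p)
  have hc : 0 ≤ c := by positivity
  -- `B + (c + 1) • 1 = r • 1 - P` with `P := c • 1 - B ≥ 0` and row sums of `P` at most `2c < r`.
  set r : ℝ := 2 * c + 1
  set P : Matrix n n ℝ := c • 1 - B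
  have hr : 0 < r := by positivity
  have hDinv : (r • 1 : Matrix n n ℝ)⁻¹ = r⁻¹ • 1 := by
    refine inv_eq_left_inv ?_
    rw [smul_mul_smul_comm, inv_mul_cancel₀ hr.ne', Matrix.one_mul, one_smul]
  have hP : ∀ p q, 0 ≤ P p q := by
    intro p q
    rcases eq_or_ne p q with rfl | hpq
    · have := (le_abs_self (B p p)).trans
        ((Finset.single_le_sum (fun q _ => abs_nonneg (B p q)) (Finset.mem_univ p)).trans (hrow p))
      simp only [P, sub_apply, smul_apply, one_apply_eq, smul_eq_mul, mul_one, sub_nonneg]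
      linarith
    · simp [P, hpq, hoff p q hpq]
  have hProw : ∀ p, ∑ q, P p q < r := by
    intro p
    have : -∑ q, B p q ≤ c := (neg_le_abs _).trans ((Finset.abs_sum_le_sum_abs _ _).trans (hrow p))
    simp only [P, sub_apply, smul_apply, one_apply, smul_eq_mul, mul_ite, mul_one, mul_zero,
      Finset.sum_sub_distrib, Finset.sum_ite_eq, Finset.mem_univ, ↓reduceIte]
    linarith
  have hD : IsUnit (r • 1 : Matrix n n ℝ).det := by simp [hr.ne']
  have hDinv_nonneg : ∀ p q, 0 ≤ (r • 1 : Matrix n n ℝ)⁻¹ p q := fun p q => by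
    rw [hDinv, smul_apply, smul_eq_mul]
    exact mul_nonneg (by positivity) (zero_le_one_elem p q)
  have hrow' : ∀ p, ∑ q, ((r • 1 : Matrix n n ℝ)⁻¹ * P) p q < 1 := fun p => by
    simp only [hDinv, smul_mul, Matrix.one_mul, smul_apply, smul_eq_mul, ← Finset.mul_sum]
    rw [inv_mul_lt_one₀ hr]
    exact hProw p
  obtain ⟨-, hnonneg⟩ := isUnit_det_sub_and_inv_nonneg hD hDinv_nonneg hP hrow'
  refine ⟨c + 1, by positivity, ?_⟩
  have heq : B + (c + 1) • (1 : Matrix n n ℝ) = r • 1 - P := by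
    simp only [P, r]; module
  rwa [heq]

theorem exists_pos_forall_inv_sub_smul_one_nonneg {D : Matrix n n ℝ} (hD : IsUnit D.det)
    (hDinv : ∀ p q, 0 ≤ D⁻¹ p q) :
    ∃ ε : ℝ, 0 < ε ∧ ∀ δ : ℝ, 0 ≤ δ → δ ≤ ε → ∀ p q, 0 ≤ (D - δ • 1)⁻¹ p q := by
  set R : ℝ := ∑ p, ∑ q, D⁻¹ p q
  have hR : 0 ≤ R := Finset.sum_nonneg fun p _ => Finset.sum_nonneg fun q _ => hDinv p q
  refine ⟨(R + 1)⁻¹, by positivity, fun δ hδ hδε => ?_⟩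
  refine (isUnit_det_sub_and_inv_nonneg hD hDinv (fun p q => ?_) fun p => ?_).2
  · rw [smul_apply, smul_eq_mul]; exact mul_nonneg hδ (zero_le_one_elem p q)
  · have hrow : ∑ q, D⁻¹ p q ≤ R := Finset.single_le_sum (f := fun p => ∑ q, D⁻¹ p q)
      (fun p _ => Finset.sum_nonneg fun q _ => hDinv p q) (Finset.mem_univ p)
    simp only [Matrix.mul_smul, Matrix.mul_one, smul_apply, smul_eq_mul, ← Finset.mul_sum]
    calc δ * ∑ q, D⁻¹ p q ≤ (R + 1)⁻¹ * R :=
          mul_le_mul hδε hrow (Finset.sum_nonneg fun q _ => hDinv p q) (by positivity)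
      _ < 1 := by rw [inv_mul_lt_one₀ (by positivity)]; linarith

theorem inv_nonneg_of_offDiag_nonpos {B : Matrix n n ℝ} (hoff : ∀ p q, p ≠ q → B p q ≤ 0)
    (hdet : ∀ t : ℝ, 0 ≤ t → IsUnit (B + t • 1).det) : ∀ p q, 0 ≤ B⁻¹ p q := by
  obtain ⟨T, hT, hTinv⟩ := exists_inv_add_smul_one_nonneg hoff
  set G : Set ℝ := Set.Icc 0 T ∩
    (fun t : ℝ => (B + t • 1)⁻¹) ⁻¹' {X : Matrix n n ℝ | ∀ p q, 0 ≤ X p q}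
  have hclosed : IsClosed G := by
    refine ContinuousOn.preimage_isClosed_of_isClosed (fun t ht => ?_) isClosed_Icc ?_
    · have hshift : Continuous fun t : ℝ => B + t • (1 : Matrix n n ℝ) := by fun_prop
      exact (continuousAt_matrix_inv _ (NormedRing.inverse_continuousAt (hdet t ht.1).unit)
        ).comp_continuousWithinAt (f := fun s : ℝ => B + s • (1 : Matrix n n ℝ))
          hshift.continuousWithinAt
    · simp only [Set.ofPred_forall]
      exact isClosed_iInter fun p => isClosed_iInter fun q =>
        isClosed_le continuous_const (continuous_id.matrix_elem p q)
  have hbdd : BddBelow G := ⟨0, fun t ht => ht.1.1⟩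
  have hmin := hclosed.csInf_mem ⟨T, ⟨le_rfl.trans' hT, le_rfl⟩, hTinv⟩ hbdd
  suffices sInf G = 0 by simpa [this] using hmin.2
  -- Otherwise the shift can be lowered a little below `sInf G` without losing nonnegativity.
  by_contra hne
  have hpos : 0 < sInf G := hmin.1.1.lt_of_ne' hne
  obtain ⟨ε, hε, hstep⟩ := exists_pos_forall_inv_sub_smul_one_nonneg (hdet _ hmin.1.1) hmin.2
  set δ := min ε (sInf G)
  have hlower : sInf G - δ ∈ G := by
    refine ⟨⟨by linarith [min_le_right ε (sInf G)], by linarith [hmin.1.2, le_min hε.le hpos.le]⟩,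
      ?_⟩
    have := hstep δ (le_min hε.le hpos.le) (min_le_left _ _)
    simpa only [Set.mem_preimage, Set.mem_ofPred_eq, sub_smul, add_sub_assoc] using this
  linarith [csInf_le hbdd hlower, lt_min hε hpos]

theorem pos_of_mulVec_apply_pos {Z : Matrix n n ℝ} (hoff : ∀ p q, p ≠ q → Z p q ≤ 0)
    {v : n → ℝ} (hv : ∀ q, 0 ≤ v q) {p : n} (h : 0 < (Z *ᵥ v) p) : 0 < v p := by
  have hoffsum : ∑ q ∈ Finset.univ.erase p, Z p q * v q ≤ 0 :=
    Finset.sum_nonpos fun q hq => mul_nonpos_of_nonpos_of_nonneg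
      (hoff p q (Finset.ne_of_mem_erase hq).symm) (hv q)
  have hdiag : 0 < Z p p * v p := by
    rw [mulVec, dotProduct, ← Finset.add_sum_erase _ _ (Finset.mem_univ p)] at h
    linarith
  exact (hv p).lt_of_ne fun h0 => by simp [← h0] at hdiag

theorem inv_sub_single_mulVec_apply {R : Type*} [CommRing R] {B : Matrix n n R}
    (hB : IsUnit B.det) (i j : n) (m : R) (hB' : IsUnit (B - single i j m).det) (v : n → R)
    (k : n) : ((B - single i j m)⁻¹ *ᵥ v) k =
      (B⁻¹ *ᵥ v) k + B⁻¹ k i * (m * ((B - single i j m)⁻¹ *ᵥ v) j) := by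
  set w := (B - single i j m)⁻¹ *ᵥ v
  have hBw : B *ᵥ w = v + (m * w j) • Pi.single i 1 := by
    have hw : (B - single i j m) *ᵥ w = v := by
      rw [mulVec_mulVec, mul_nonsing_inv _ hB', one_mulVec]
    rw [← single_mulVec_eq, ← hw, ← add_mulVec, sub_add_cancel]
  have hw : w = B⁻¹ *ᵥ (B *ᵥ w) := by rw [mulVec_mulVec, nonsing_inv_mul _ hB, one_mulVec]
  conv_lhs => rw [hw, hBw, mulVec_add, mulVec_smul, mulVec_single_one]
  simp [mul_comm]

end Matrix

theorem IsHurwitz.isUnit_det_smul_one_sub {n : Type*} [Fintype n] [DecidableEq n]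
    {B : Matrix n n ℝ} (hB : IsHurwitz B) {t : ℝ} (ht : 0 ≤ t) : IsUnit (t • 1 - B).det := by
  by_contra hdet
  have hmap : algebraMap ℂ (Matrix n n ℂ) t - B.map Complex.ofReal =
      (t • 1 - B).map Complex.ofReal := by
    ext p q
    by_cases hpq : p = q <;> simp [algebraMap_matrix_apply, one_apply, hpq]
  have hspec : (t : ℂ) ∈ spectrum ℂ (B.map Complex.ofReal) := by
    have hdet_map : ((t • 1 - B).map Complex.ofReal).det = (t • 1 - B).det :=
      (RingHom.map_det Complex.ofRealHom _).symm
    rwa [spectrum.mem_iff, hmap, isUnit_iff_isUnit_det, hdet_map, isUnit_iff_ne_zero,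
      Complex.ofReal_ne_zero, ← isUnit_iff_ne_zero]
  simpa using (hB _ hspec).trans_le ht

theorem Matrix.inv_nonneg_of_isHurwitz_neg {n : Type*} [Fintype n] [DecidableEq n]
    {B : Matrix n n ℝ} (hoff : ∀ p q, p ≠ q → B p q ≤ 0) (hB : IsHurwitz (-B)) :
    ∀ p q, 0 ≤ B⁻¹ p q :=
  inv_nonneg_of_offDiag_nonpos hoff fun _ ht => by
    simpa [add_comm] using hB.isUnit_det_smul_one_sub ht

theorem stmt_15_general {N : ℕ} (hN : 0 < N) (A M : Matrix (Fin N) (Fin N) ℝ)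
    (hAdiag : ∀ p q, p ≠ q → A p q = 0)
    (hMnonneg : ∀ p q, 0 ≤ M p q)
    (hHur : IsHurwitz (-(A - M)))
    (k : Fin N)
    (hk : ∀ p, ((A - M)⁻¹ *ᵥ (fun _ : Fin N => (1 : ℝ))) p ≤
      ((A - M)⁻¹ *ᵥ (fun _ : Fin N => (1 : ℝ))) k)
    (i j : Fin N) (m : ℝ) (hm : 0 < m)
    (hHur2 : IsHurwitz (-(A - M - Matrix.single i j m)))
    (hki : 0 < (A - M)⁻¹ k i) :
    haveI : Nonempty (Fin N) := Fin.pos_iff_nonempty.mp hN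
    let u : Fin N → ℝ := (A - M)⁻¹ *ᵥ (fun _ => (1 : ℝ))
    let ubar : Fin N → ℝ := (A - M - Matrix.single i j m)⁻¹ *ᵥ (fun _ => (1 : ℝ))
    Finset.univ.sup' Finset.univ_nonempty u < ubar k ∧
    Finset.univ.sup' Finset.univ_nonempty u <
      Finset.univ.sup' Finset.univ_nonempty ubar := by
  intro u ubar
  have : Nonempty (Fin N) := Fin.pos_iff_nonempty.mp hN
  have hB : IsUnit (A - M).det := by simpa using hHur.isUnit_det_smul_one_sub le_rfl
  have hB' : IsUnit (A - M - single i j m).det := by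
    simpa using hHur2.isUnit_det_smul_one_sub le_rfl
  have hZ : ∀ p q, p ≠ q → (A - M - single i j m) p q ≤ 0 := by
    intro p q hpq
    have : 0 ≤ single i j m p q := by
      rw [single_apply]; split_ifs <;> [exact hm.le; exact le_rfl]
    simp only [Matrix.sub_apply, hAdiag p q hpq]
    linarith [hMnonneg p q]
  have hubar_nonneg : ∀ q, 0 ≤ ubar q := fun q => by
    simpa [ubar, mulVec, dotProduct] using
      Finset.sum_nonneg fun l _ => inv_nonneg_of_isHurwitz_neg hZ hHur2 q l
  have hubar_j : 0 < ubar j := pos_of_mulVec_apply_pos hZ hubar_nonneg (by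
    simp [ubar, mulVec_mulVec, mul_nonsing_inv _ hB'])
  have hlt : u k < ubar k := by
    have hupdate : ubar k = u k + (A - M)⁻¹ k i * (m * ubar j) :=
      inv_sub_single_mulVec_apply hB i j m hB' _ k
    linarith [mul_pos hki (mul_pos hm hubar_j)]
  have hsup : Finset.univ.sup' Finset.univ_nonempty u ≤ u k := Finset.sup'_le _ _ fun p _ => hk p
  exact ⟨hsup.trans_lt hlt, hsup.trans_lt (hlt.trans_le (Finset.le_sup' ubar (Finset.mem_univ k)))⟩

/-- Suppose `-(A-M)` is Hurwitz, `u = (A-M)⁻¹ 𝟙`, and `k` attains the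
maximum of `u`. Let `i ≠ j` with `Mᵢⱼ = 0`, `m > 0`, suppose `-(A - M - m eᵢ eⱼᵀ)` is
Hurwitz and `((A-M)⁻¹)ₖᵢ > 0`. Then `ū = (A - M - m eᵢ eⱼᵀ)⁻¹ 𝟙` satisfies
`ūₖ > maxᵢ uᵢ`; in particular `max ū > max u`, so adding the edge is not scalable. -/
theorem stmt_15 {N : ℕ} (hN : 0 < N) (A M : Matrix (Fin N) (Fin N) ℝ)
    (hAdiag : ∀ p q, p ≠ q → A p q = 0) (hApos : ∀ p, 0 < A p p)
    (hMnonneg : ∀ p q, 0 ≤ M p q) (hMdiag : ∀ p, M p p = 0)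
    (hHur : IsHurwitz (-(A - M)))
    (k : Fin N)
    (hk : ∀ p, ((A - M)⁻¹ *ᵥ (fun _ : Fin N => (1 : ℝ))) p ≤
      ((A - M)⁻¹ *ᵥ (fun _ : Fin N => (1 : ℝ))) k)
    (i j : Fin N) (hij : i ≠ j) (hMij : M i j = 0) (m : ℝ) (hm : 0 < m)
    (hHur2 : IsHurwitz (-(A - M - Matrix.single i j m)))
    (hki : 0 < (A - M)⁻¹ k i) :
    haveI : Nonempty (Fin N) := Fin.pos_iff_nonempty.mp hN
    let u : Fin N → ℝ := (A - M)⁻¹ *ᵥ (fun _ => (1 : ℝ))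
    let ubar : Fin N → ℝ := (A - M - Matrix.single i j m)⁻¹ *ᵥ (fun _ => (1 : ℝ))
    Finset.univ.sup' Finset.univ_nonempty u < ubar k ∧
    Finset.univ.sup' Finset.univ_nonempty u <
      Finset.univ.sup' Finset.univ_nonempty ubar :=
  stmt_15_general hN A M hAdiag hMnonneg hHur k hk i j m hm hHur2 hki
end
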